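/- arXiv:1212.5778 — 9 statements merged into one kernel-verified Lean document; each statement's English description precedes it below -/
import Mathlib

section
/- Let A and B be unital C*-algebras each satisfying the AW* annihilator condition, and let f : A → B be a unital *-ring homomorphism (additive, multiplicative, f(1) = 1, f(a*) = f(a)*). Then the following conditions are equivalent: (a) f preserves right annihilating projections: whenever S ⊆ A, p is a projection of A such that for all x ∈ A one has (∀ s ∈ S, s·x = 0) ↔ p·x = x, and q is a projection of B such that for all y ∈ B one has (∀ s ∈ S, f(s)·y = 0) ↔ q·y = y, then f(p) = q; (b) f preserves suprema of arbitrary families of projections: whenever p is a least upper bound of a set P of projections of A in the projection order, f(p) is a least upper bound of the image set f(P) in the projection order of B; (c) f preserves suprema of orthogonal families of projections, i.e., condition (b) restricted to sets P of projections satisfying p·q = 0 for all distinct p, q ∈ P; (d) f preserves suprema of upward-directed sets of projections, i.e., condition (b) restricted to sets P such that any two elements of P have an upper bound in P. -/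
/-!
Write `annProj S` for the projection generating the right annihilator of `S`. The supremum of a
set `P` of projections is `1 - annProj P`, so (a) gives (b) at once. Conversely, both (c) and (d)
force `f` to preserve right support projections `rightProj s = 1 - annProj {s}`: for `a = s⋆s`,
`rightProj a` is the supremum of the increasing sequence of support projections of
`(a - 1/(n+1))₊`, which lie in the left ideal `A a`, and also of the orthogonal differences of
that sequence. Given a projection `q`, one then finds `r` with `f r * q = 0` that is a right unit
for the left ideal `{x | f x * q = 0}` (a supremum of the directed family of support projections
of that ideal, or of a maximal orthogonal family of projections in it), and such an `r` forces
`f p = q` in (a).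
-/

/-- `p` is a projection in a `*`-ring: a self-adjoint idempotent. -/
def IsProjElem {A : Type*} [Mul A] [Star A] (p : A) : Prop :=
  p * p = p ∧ star p = p

/-- The AW* annihilator condition: the right annihilator of any subset is
generated (as a right ideal) by a projection. -/
def AWStarAnnihilator (A : Type*) [Mul A] [Star A] [Zero A] : Prop :=
  ∀ S : Set A, ∃ p : A, IsProjElem p ∧ ∀ x : A, (∀ s ∈ S, s * x = 0) ↔ p * x = x

/-- `p` is a least upper bound of the set `P` of projections in the projection
order `q ≤ p ↔ q * p = q`. -/
def IsProjLUB {A : Type*} [Mul A] [Star A] (P : Set A) (p : A) : Prop :=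
  IsProjElem p ∧ (∀ q ∈ P, q * p = q) ∧
    ∀ r : A, IsProjElem r → (∀ q ∈ P, q * r = q) → p * r = p

open Set

lemma mul_one_sub_eq_zero_iff {R : Type*} [Ring R] {a b : R} : a * (1 - b) = 0 ↔ a * b = a := by
  rw [mul_sub, mul_one, sub_eq_zero, eq_comm]

lemma one_sub_mul_eq_one_sub {R : Type*} [Ring R] {a b : R} (h : a * (1 - b) = 1 - b) :
    (1 - a) * b = 1 - a := by
  calc (1 - a) * b = 1 - a - (1 - b - a * (1 - b)) := by noncomm_ring
    _ = 1 - a := by rw [h, sub_self, sub_zero]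

namespace IsProjElem

section Ring

variable {A : Type*} [Ring A] [StarRing A] {p q : A}

lemma one_sub (hp : IsProjElem p) : IsProjElem (1 - p) := by
  refine ⟨?_, by rw [star_sub, star_one, hp.2]⟩
  rw [sub_mul, one_mul, mul_sub, mul_one, hp.1, sub_self, sub_zero]

lemma mul_eq_self_comm (hp : IsProjElem p) (hq : IsProjElem q) : p * q = p ↔ q * p = p := by
  constructor <;> intro h <;> simpa only [star_mul, hp.2, hq.2] using congrArg star h

lemma mul_eq_zero_symm (hp : IsProjElem p) (hq : IsProjElem q) (h : p * q = 0) : q * p = 0 := by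
  simpa only [star_mul, hp.2, hq.2, star_zero] using congrArg star h

lemma antisymm (hp : IsProjElem p) (hq : IsProjElem q) (hpq : p * q = p) (hqp : q * p = q) :
    p = q := by
  rw [← (hq.mul_eq_self_comm hp).mp hqp, hpq]

lemma sub (hp : IsProjElem p) (hq : IsProjElem q) (h : p * q = p) : IsProjElem (q - p) := by
  refine ⟨?_, by rw [star_sub, hp.2, hq.2]⟩
  rw [sub_mul, mul_sub, mul_sub, hq.1, (hp.mul_eq_self_comm hq).mp h, h, hp.1, sub_self, sub_zero]

lemma map {B : Type*} [Ring B] [StarRing B] (f : A →+* B) (hf : ∀ a, f (star a) = star (f a))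
    (hp : IsProjElem p) : IsProjElem (f p) :=
  ⟨by rw [← map_mul, hp.1], by rw [← hf, hp.2]⟩

end Ring

lemma nonneg {A : Type*} [Ring A] [StarRing A] [PartialOrder A] [StarOrderedRing A] {p : A}
    (hp : IsProjElem p) : 0 ≤ p := by
  simpa only [hp.2, hp.1] using star_mul_self_nonneg p

lemma mul_eq_zero_of_le {A : Type*} [NormedRing A] [StarRing A] [CStarRing A] [PartialOrder A]
    [StarOrderedRing A] {p b y : A} (hp : IsProjElem p) (hpb : p ≤ b) (hby : b * y = 0) :
    p * y = 0 := by
  have hsq : star (p * y) * (p * y) = star y * p * y := by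
    rw [star_mul, hp.2, mul_assoc, ← mul_assoc p, hp.1, mul_assoc]
  have hle : star (p * y) * (p * y) ≤ 0 := by
    simpa only [hsq, mul_assoc, hby, mul_zero] using star_left_conjugate_le_conjugate hpb y
  exact (CStarRing.star_mul_self_eq_zero_iff _).mp (le_antisymm hle (star_mul_self_nonneg _))

end IsProjElem

namespace IsProjLUB

variable {A : Type*} [Ring A] [StarRing A] {P : Set A} {p p' : A}

lemma unique (h : IsProjLUB P p) (h' : IsProjLUB P p') : p = p' :=
  h.1.antisymm h'.1 (h.2.2 p' h'.1 h'.2.1) (h'.2.2 p h.1 h.2.1)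

lemma mul_eq_zero (h : IsProjLUB P p) {q : A} (hq : IsProjElem q) (hP : ∀ e ∈ P, e * q = 0) :
    p * q = 0 := by
  have hub : p * (1 - q) = p :=
    h.2.2 _ hq.one_sub fun e he => by rw [mul_sub, mul_one, hP e he, sub_zero]
  rwa [mul_sub, mul_one, sub_eq_self] at hub

end IsProjLUB

lemma isProjLUB_one_sub {A : Type*} [Ring A] [StarRing A] {T : Set A} {e : A} (he : IsProjElem e)
    (hann : ∀ x : A, (∀ t ∈ T, t * x = 0) ↔ e * x = x) :
    IsProjLUB T (1 - e) := by
  refine ⟨he.one_sub, fun t ht => ?_, fun r _ hr => ?_⟩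
  · rw [mul_sub, mul_one, (hann e).mpr he.1 t ht, sub_zero]
  · refine one_sub_mul_eq_one_sub ((hann _).mp fun t ht => ?_)
    exact mul_one_sub_eq_zero_iff.mpr (hr t ht)

namespace AWStarAnnihilator

section Ring

variable {A : Type*} [Ring A] [StarRing A] (hA : AWStarAnnihilator A)

noncomputable def annProj (S : Set A) : A := (hA S).choose

lemma isProjElem_annProj (S : Set A) : IsProjElem (hA.annProj S) := (hA S).choose_spec.1

lemma forall_mul_eq_zero_iff (S : Set A) (x : A) :
    (∀ s ∈ S, s * x = 0) ↔ hA.annProj S * x = x :=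
  (hA S).choose_spec.2 x

lemma isProjLUB_one_sub_annProj (S : Set A) : IsProjLUB S (1 - hA.annProj S) :=
  isProjLUB_one_sub (hA.isProjElem_annProj S) (hA.forall_mul_eq_zero_iff S)

lemma mul_annProj {S : Set A} {s : A} (hs : s ∈ S) : s * hA.annProj S = 0 :=
  (hA.forall_mul_eq_zero_iff S _).mpr (hA.isProjElem_annProj S).1 s hs

noncomputable def rightProj (x : A) : A := 1 - hA.annProj {x}

lemma isProjElem_rightProj (x : A) : IsProjElem (hA.rightProj x) :=
  (hA.isProjElem_annProj _).one_sub

lemma rightProj_mul_eq_zero_iff {x y : A} : hA.rightProj x * y = 0 ↔ x * y = 0 := by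
  rw [rightProj, sub_mul, one_mul, sub_eq_zero, eq_comm, ← hA.forall_mul_eq_zero_iff]
  simp only [mem_singleton_iff, forall_eq]

lemma rightProj_mul_eq_self_iff {x r : A} : hA.rightProj x * r = hA.rightProj x ↔ x * r = x := by
  rw [← mul_one_sub_eq_zero_iff, hA.rightProj_mul_eq_zero_iff, mul_one_sub_eq_zero_iff]

lemma mul_rightProj (x : A) : x * hA.rightProj x = x :=
  (hA.rightProj_mul_eq_self_iff).mp (hA.isProjElem_rightProj x).1

lemma rightProj_mul_rightProj_of_eq_mul {x y c : A} (h : x = c * y) :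
    hA.rightProj x * hA.rightProj y = hA.rightProj x := by
  rw [hA.rightProj_mul_eq_self_iff, h, mul_assoc, hA.mul_rightProj]

end Ring

section CStarAlgebra

variable {A : Type*} [CStarAlgebra A] (hA : AWStarAnnihilator A)

lemma rightProj_star_mul_self (s : A) : hA.rightProj (star s * s) = hA.rightProj s := by
  refine (hA.isProjElem_rightProj _).antisymm (hA.isProjElem_rightProj s)
    (hA.rightProj_mul_rightProj_of_eq_mul rfl) ((hA.rightProj_mul_eq_self_iff).mpr ?_)
  have h := mul_one_sub_eq_zero_iff.mpr (hA.mul_rightProj (star s * s))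
  rw [← mul_one_sub_eq_zero_iff, ← CStarRing.star_mul_self_eq_zero_iff, star_mul, mul_assoc,
    ← mul_assoc (star s), h, mul_zero]

lemma mul_rightProj_add {p q : A} (hp : IsProjElem p) (hq : IsProjElem q) :
    p * hA.rightProj (p + q) = p := by
  let _ := CStarAlgebra.spectralOrder A
  let _ := CStarAlgebra.spectralOrderedRing A
  refine mul_one_sub_eq_zero_iff.mp (hp.mul_eq_zero_of_le (le_add_of_nonneg_right hq.nonneg) ?_)
  exact mul_one_sub_eq_zero_iff.mpr (hA.mul_rightProj _)

end CStarAlgebra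

end AWStarAnnihilator

noncomputable def cutoff (ε t : ℝ) : ℝ := max (t - ε) 0

section Cutoff

variable {ε δ t : ℝ}

lemma continuous_cutoff (ε : ℝ) : Continuous (cutoff ε) :=
  (continuous_id.sub continuous_const).max continuous_const

lemma cutoff_of_le (h : t ≤ ε) : cutoff ε t = 0 := max_eq_right (by linarith)

lemma cutoff_of_ge (h : ε ≤ t) : cutoff ε t = t - ε := max_eq_left (by linarith)

lemma cutoff_mul_inv_mul_self (hε : 0 < ε) (t : ℝ) :
    cutoff ε t * ((max t ε)⁻¹ * t) = cutoff ε t := by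
  rcases le_or_gt t ε with h | h
  · rw [cutoff_of_le h, zero_mul]
  · rw [max_eq_left h.le, inv_mul_cancel₀ (by linarith), mul_one]

lemma cutoff_eq_mul_cutoff (h : δ < ε) (t : ℝ) :
    cutoff ε t = cutoff ε t * (max (cutoff δ t) (ε - δ))⁻¹ * cutoff δ t := by
  rcases le_or_gt t ε with ht | ht
  · rw [cutoff_of_le ht, zero_mul, zero_mul]
  · have hδ : ε - δ < cutoff δ t := by rw [cutoff_of_ge (by linarith)]; linarith
    rw [max_eq_left hδ.le, mul_assoc, inv_mul_cancel₀ (by linarith), mul_one]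

lemma abs_sub_cutoff_le (hε : 0 ≤ ε) (ht : 0 ≤ t) : |t - cutoff ε t| ≤ ε := by
  rcases le_or_gt t ε with h | h
  · rw [cutoff_of_le h, sub_zero, abs_of_nonneg ht]; exact h
  · rw [cutoff_of_ge h.le, sub_sub_cancel, abs_of_nonneg hε]

end Cutoff

section CFC

variable {A : Type*} [CStarAlgebra A] {a : A} {ε δ : ℝ}

lemma cfc_cutoff_mul_mul_self (hε : 0 < ε) (ha : IsSelfAdjoint a) :
    cfc (cutoff ε) a * (cfc (fun t => (max t ε)⁻¹) a * a) = cfc (cutoff ε) a := by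
  have hcont : Continuous fun t : ℝ => (max t ε)⁻¹ :=
    (continuous_id.max continuous_const).inv₀ fun t => (lt_max_of_lt_right hε).ne'
  calc cfc (cutoff ε) a * (cfc (fun t => (max t ε)⁻¹) a * a)
      = cfc (cutoff ε) a * (cfc (fun t => (max t ε)⁻¹) a * cfc (fun t : ℝ => t) a) := by
        rw [cfc_id' ℝ a ha]
    _ = cfc (fun t => cutoff ε t * ((max t ε)⁻¹ * t)) a := by
        rw [← cfc_mul _ _ a hcont.continuousOn,
          ← cfc_mul (cutoff ε) (fun t => (max t ε)⁻¹ * t) a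
            (continuous_cutoff ε).continuousOn (hcont.mul continuous_id).continuousOn]
    _ = cfc (cutoff ε) a := congrArg (cfc · a) (funext (cutoff_mul_inv_mul_self hε))

lemma cfc_cutoff_eq_mul_cfc_cutoff (h : δ < ε) :
    cfc (cutoff ε) a =
      cfc (fun t => cutoff ε t * (max (cutoff δ t) (ε - δ))⁻¹) a * cfc (cutoff δ) a := by
  have hcont : Continuous fun t => cutoff ε t * (max (cutoff δ t) (ε - δ))⁻¹ :=
    (continuous_cutoff ε).mul (((continuous_cutoff δ).max continuous_const).inv₀
      fun t => (lt_max_of_lt_right (sub_pos.mpr h)).ne')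
  rw [← cfc_mul _ _ a hcont.continuousOn (continuous_cutoff δ).continuousOn]
  exact congrArg (cfc · a) (funext (cutoff_eq_mul_cutoff h))

lemma norm_sub_cfc_cutoff_le [PartialOrder A] [StarOrderedRing A] (hε : 0 ≤ ε) (ha : 0 ≤ a) :
    ‖a - cfc (cutoff ε) a‖ ≤ ε := by
  nth_rw 1 [← cfc_id' ℝ a (IsSelfAdjoint.of_nonneg ha)]
  rw [← cfc_sub (fun t : ℝ => t) (cutoff ε) a continuous_id.continuousOn
    (continuous_cutoff ε).continuousOn]
  exact norm_cfc_le hε fun t ht =>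
    (Real.norm_eq_abs _).trans_le (abs_sub_cutoff_le hε (spectrum_nonneg_of_nonneg ha ht))

end CFC

section ProjDiff

variable {A : Type*} [Ring A] {e : ℕ → A}

def projDiff (e : ℕ → A) : ℕ → A
  | 0 => e 0
  | n + 1 => e (n + 1) - e n

lemma isProjElem_projDiff [StarRing A] (he : ∀ n, IsProjElem (e n))
    (hmono : ∀ m n, m ≤ n → e m * e n = e m) :
    ∀ n, IsProjElem (projDiff e n)
  | 0 => he 0
  | n + 1 => (he n).sub (he (n + 1)) (hmono n (n + 1) n.le_succ)

lemma projDiff_mul_of_le (hmono : ∀ m n, m ≤ n → e m * e n = e m) {m n : ℕ} (h : m ≤ n) :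
    projDiff e m * e n = projDiff e m := by
  cases m with
  | zero => exact hmono 0 n h
  | succ k => rw [projDiff, sub_mul, hmono _ _ h, hmono _ _ (by omega)]

lemma projDiff_mul_projDiff_of_lt (hmono : ∀ m n, m ≤ n → e m * e n = e m) {m n : ℕ}
    (h : m < n) : projDiff e m * projDiff e n = 0 := by
  obtain ⟨k, rfl⟩ : ∃ k, n = k + 1 := ⟨n - 1, by omega⟩
  rw [projDiff, mul_sub, projDiff_mul_of_le hmono h.le,
    projDiff_mul_of_le hmono (by omega : m ≤ k), sub_self]

lemma pairwise_range_projDiff [StarRing A] (he : ∀ n, IsProjElem (e n))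
    (hmono : ∀ m n, m ≤ n → e m * e n = e m) :
    (range (projDiff e)).Pairwise fun p q => p * q = 0 := by
  rintro _ ⟨i, rfl⟩ _ ⟨j, rfl⟩ hne
  rcases lt_trichotomy i j with h | rfl | h
  · exact projDiff_mul_projDiff_of_lt hmono h
  · exact absurd rfl hne
  · exact (isProjElem_projDiff he hmono j).mul_eq_zero_symm (isProjElem_projDiff he hmono i)
      (projDiff_mul_projDiff_of_lt hmono h)

lemma isProjLUB_range_projDiff [StarRing A] (hmono : ∀ m n, m ≤ n → e m * e n = e m) {p : A}
    (h : IsProjLUB (range e) p) : IsProjLUB (range (projDiff e)) p := by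
  refine ⟨h.1, ?_, fun r hr hub => h.2.2 r hr ?_⟩
  · rintro _ ⟨n, rfl⟩
    rw [← projDiff_mul_of_le hmono le_rfl, mul_assoc, h.2.1 _ ⟨n, rfl⟩]
  · have hsucc (n : ℕ) : e (n + 1) = e n + projDiff e (n + 1) := by
      rw [projDiff, add_sub_cancel]
    rintro _ ⟨n, rfl⟩
    induction n with
    | zero => exact hub _ ⟨0, rfl⟩
    | succ n ih => rw [hsucc, add_mul, ih, hub _ ⟨n + 1, rfl⟩]

end ProjDiff

namespace AWStarAnnihilator

variable {A : Type*} [CStarAlgebra A] (hA : AWStarAnnihilator A) {a : A} {ε δ : ℝ}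

noncomputable def cutoffProj (a : A) (ε : ℝ) : A := hA.rightProj (cfc (cutoff ε) a)

lemma isProjElem_cutoffProj (a : A) (ε : ℝ) : IsProjElem (hA.cutoffProj a ε) :=
  hA.isProjElem_rightProj _

lemma exists_cutoffProj_eq_mul (hε : 0 < ε) (ha : IsSelfAdjoint a) :
    ∃ c, hA.cutoffProj a ε = c * a := by
  refine ⟨hA.cutoffProj a ε * cfc (fun t => (max t ε)⁻¹) a, ?_⟩
  rw [mul_assoc]
  exact ((hA.rightProj_mul_eq_self_iff).mpr (cfc_cutoff_mul_mul_self hε ha)).symm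

lemma cutoffProj_mul_cutoffProj (a : A) (h : δ ≤ ε) :
    hA.cutoffProj a ε * hA.cutoffProj a δ = hA.cutoffProj a ε := by
  rcases h.lt_or_eq with h | rfl
  · exact hA.rightProj_mul_rightProj_of_eq_mul (cfc_cutoff_eq_mul_cfc_cutoff h)
  · exact (hA.isProjElem_cutoffProj a δ).1

lemma cutoffProj_seq_mul_of_le (a : A) {m n : ℕ} (h : m ≤ n) :
    hA.cutoffProj a (1 / (m + 1)) * hA.cutoffProj a (1 / (n + 1)) =
      hA.cutoffProj a (1 / (m + 1)) :=
  hA.cutoffProj_mul_cutoffProj a (Nat.one_div_le_one_div h)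

lemma isProjLUB_range_cutoffProj [PartialOrder A] [StarOrderedRing A] (ha : 0 ≤ a) :
    IsProjLUB (range fun n : ℕ => hA.cutoffProj a (1 / (n + 1))) (hA.rightProj a) := by
  refine ⟨hA.isProjElem_rightProj a, ?_, fun r _ hr => ?_⟩
  · rintro _ ⟨n, rfl⟩
    obtain ⟨c, hc⟩ :=
      hA.exists_cutoffProj_eq_mul (ε := 1 / (n + 1)) (by positivity) (IsSelfAdjoint.of_nonneg ha)
    dsimp only
    rw [hc, mul_assoc, hA.mul_rightProj]
  have hbound (n : ℕ) : ‖a * (1 - r)‖ ≤ 1 / (n + 1) * ‖1 - r‖ := by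
    set x := cfc (cutoff (1 / (n + 1))) a
    have hxr : hA.rightProj x * r = hA.rightProj x := hr _ ⟨n, rfl⟩
    have hx : x * (1 - r) = 0 := by
      rw [← hA.mul_rightProj x, mul_assoc, mul_one_sub_eq_zero_iff.mpr hxr, mul_zero]
    calc ‖a * (1 - r)‖ = ‖(a - x) * (1 - r)‖ := by rw [sub_mul, hx, sub_zero]
      _ ≤ ‖a - x‖ * ‖1 - r‖ := norm_mul_le _ _
      _ ≤ 1 / (n + 1) * ‖1 - r‖ := by
        gcongr; exact norm_sub_cfc_cutoff_le (by positivity) ha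
  have hlim := (tendsto_one_div_add_atTop_nhds_zero_nat (𝕜 := ℝ)).mul_const ‖(1 : A) - r‖
  rw [zero_mul] at hlim
  have hr0 : a * (1 - r) = 0 := norm_le_zero_iff.mp (ge_of_tendsto' hlim hbound)
  exact (hA.rightProj_mul_eq_self_iff).mpr (mul_one_sub_eq_zero_iff.mp hr0)

end AWStarAnnihilator

lemma exists_maximal_pairwise {α : Type*} (Q : α → Prop) (r : α → α → Prop) :
    ∃ E : Set α, Maximal (fun E : Set α => (∀ e ∈ E, Q e) ∧ E.Pairwise r) E :=
  zorn_subset _ fun c hcO hc =>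
    ⟨⋃₀ c, ⟨fun _ ⟨_, hE, he⟩ => (hcO hE).1 _ he,
      (pairwise_sUnion hc.directedOn).mpr fun _ hE => (hcO hE).2⟩,
      fun _ => subset_sUnion_of_mem⟩

section Hom

variable {A B : Type*} [Ring A] [StarRing A] [Ring B] [StarRing B]

def PreservesAnnihilatorProj (f : A → B) : Prop :=
  ∀ (S : Set A) (p : A) (q : B), IsProjElem p → IsProjElem q →
    (∀ x : A, (∀ s ∈ S, s * x = 0) ↔ p * x = x) →
    (∀ y : B, (∀ s ∈ S, f s * y = 0) ↔ q * y = y) → f p = q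

def PreservesProjLUB (f : A → B) (C : Set A → Prop) : Prop :=
  ∀ (P : Set A) (p : A), (∀ q ∈ P, IsProjElem q) → C P → IsProjLUB P p →
    IsProjLUB (f '' P) (f p)

lemma preservesAnnihilatorProj_of_exists_mul_eq_self (f : A →+* B)
    (hf : ∀ a, f (star a) = star (f a))
    (h : ∀ q : B, IsProjElem q → ∃ r : A, f r * q = 0 ∧ ∀ x, f x * q = 0 → x * r = x) :
    PreservesAnnihilatorProj f := by
  intro S p q hp hq hpS hqS
  obtain ⟨r, hrq, hr⟩ := h q hq
  have hpr : (1 - p) * r = 1 - p := one_sub_mul_eq_one_sub <| (hpS _).mp fun s hs =>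
    mul_one_sub_eq_zero_iff.mpr (hr s ((hqS q).mpr hq.1 s hs))
  have hpq : f p * q = q := by
    have h0 : f (1 - p) * q = 0 := by rw [← hpr, map_mul, mul_assoc, hrq, mul_zero]
    rwa [map_sub, map_one, sub_mul, one_mul, sub_eq_zero, eq_comm] at h0
  have hqp : q * f p = f p := (hqS _).mp fun s hs => by
    rw [← map_mul, (hpS p).mpr hp.1 s hs, map_zero]
  have hfp := hp.map f hf
  exact hfp.antisymm hq ((hfp.mul_eq_self_comm hq).mpr hqp) ((hq.mul_eq_self_comm hfp).mpr hpq)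

lemma PreservesAnnihilatorProj.isProjLUB_image (hA : AWStarAnnihilator A)
    (hB : AWStarAnnihilator B) {f : A →+* B} (h : PreservesAnnihilatorProj f) {P : Set A}
    {p : A} (hp : IsProjLUB P p) : IsProjLUB (f '' P) (f p) := by
  have hann : f (hA.annProj P) = hB.annProj (f '' P) :=
    h P _ _ (hA.isProjElem_annProj P) (hB.isProjElem_annProj _) (hA.forall_mul_eq_zero_iff P)
      fun y => by rw [← hB.forall_mul_eq_zero_iff, forall_mem_image]
  rw [hp.unique (hA.isProjLUB_one_sub_annProj P), map_sub, map_one, hann]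
  exact hB.isProjLUB_one_sub_annProj _

lemma map_rightProj_of_isProjLUB (hA : AWStarAnnihilator A) (hB : AWStarAnnihilator B)
    (f : A →+* B) (hf : ∀ a, f (star a) = star (f a)) {a : A} {P : Set A}
    (hP : ∀ z ∈ P, ∃ c, z = c * a)
    (H : IsProjLUB (f '' P) (f (hA.rightProj a))) : f (hA.rightProj a) = hB.rightProj (f a) := by
  refine ((hA.isProjElem_rightProj a).map f hf).antisymm (hB.isProjElem_rightProj _)
    (H.2.2 _ (hB.isProjElem_rightProj _) (forall_mem_image.mpr fun z hz => ?_)) ?_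
  · obtain ⟨c, rfl⟩ := hP z hz
    rw [map_mul, mul_assoc, hB.mul_rightProj]
  · rw [hB.rightProj_mul_eq_self_iff, ← map_mul, hA.mul_rightProj]

end Hom

section CStarAlgebra

variable {A B : Type*} [CStarAlgebra A] [CStarAlgebra B]

lemma map_rightProj_of_preservesProjLUB_directed (hA : AWStarAnnihilator A)
    (hB : AWStarAnnihilator B) (f : A →+* B) (hf : ∀ a, f (star a) = star (f a))
    (h : PreservesProjLUB f (DirectedOn fun p q => p * q = p)) (s : A) :
    f (hA.rightProj s) = hB.rightProj (f s) := by
  let _ := CStarAlgebra.spectralOrder A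
  let _ := CStarAlgebra.spectralOrderedRing A
  have ha : 0 ≤ star s * s := star_mul_self_nonneg s
  rw [← hA.rightProj_star_mul_self, ← hB.rightProj_star_mul_self, ← hf, ← map_mul]
  refine map_rightProj_of_isProjLUB hA hB f hf ?_
    (h _ _ ?_ ?_ (hA.isProjLUB_range_cutoffProj ha))
  · rintro _ ⟨n, rfl⟩
    exact hA.exists_cutoffProj_eq_mul (by positivity) (IsSelfAdjoint.of_nonneg ha)
  · rintro _ ⟨n, rfl⟩
    exact hA.isProjElem_cutoffProj _ _
  · rintro _ ⟨i, rfl⟩ _ ⟨j, rfl⟩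
    exact ⟨_, ⟨max i j, rfl⟩, hA.cutoffProj_seq_mul_of_le _ (le_max_left i j),
      hA.cutoffProj_seq_mul_of_le _ (le_max_right i j)⟩

lemma map_rightProj_of_preservesProjLUB_pairwise (hA : AWStarAnnihilator A)
    (hB : AWStarAnnihilator B) (f : A →+* B) (hf : ∀ a, f (star a) = star (f a))
    (h : PreservesProjLUB f (·.Pairwise fun p q => p * q = 0)) (s : A) :
    f (hA.rightProj s) = hB.rightProj (f s) := by
  let _ := CStarAlgebra.spectralOrder A
  let _ := CStarAlgebra.spectralOrderedRing A
  have ha : 0 ≤ star s * s := star_mul_self_nonneg s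
  rw [← hA.rightProj_star_mul_self, ← hB.rightProj_star_mul_self, ← hf, ← map_mul]
  set e := fun n : ℕ => hA.cutoffProj (star s * s) (1 / (n + 1))
  have he : ∀ n, IsProjElem (e n) := fun n => hA.isProjElem_cutoffProj _ _
  have hmono : ∀ m n, m ≤ n → e m * e n = e m := fun m n => hA.cutoffProj_seq_mul_of_le _
  refine map_rightProj_of_isProjLUB hA hB f hf ?_ (h _ _ ?_ (pairwise_range_projDiff he hmono)
    (isProjLUB_range_projDiff hmono (hA.isProjLUB_range_cutoffProj ha)))
  · rintro _ ⟨n, rfl⟩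
    obtain ⟨c, hc⟩ :=
      hA.exists_cutoffProj_eq_mul (ε := 1 / (n + 1)) (by positivity) (IsSelfAdjoint.of_nonneg ha)
    exact ⟨projDiff e n * c, by rw [mul_assoc, ← hc, projDiff_mul_of_le hmono le_rfl]⟩
  · rintro _ ⟨n, rfl⟩
    exact isProjElem_projDiff he hmono n

lemma exists_mul_eq_self_of_preservesProjLUB_directed (hA : AWStarAnnihilator A)
    (hB : AWStarAnnihilator B) (f : A →+* B) (hf : ∀ a, f (star a) = star (f a))
    (h : PreservesProjLUB f (DirectedOn fun p q => p * q = p)) {q : B} (hq : IsProjElem q) :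
    ∃ r : A, f r * q = 0 ∧ ∀ x, f x * q = 0 → x * r = x := by
  set M := {x : A | f x * q = 0}
  have hM : ∀ x ∈ M, f (hA.rightProj x) * q = 0 := fun x hx => by
    rw [map_rightProj_of_preservesProjLUB_directed hA hB f hf h, hB.rightProj_mul_eq_zero_iff]
    exact hx
  have hlub : IsProjLUB (hA.rightProj '' M) (1 - hA.annProj M) :=
    isProjLUB_one_sub (hA.isProjElem_annProj M) fun y => by
      simp only [forall_mem_image, hA.rightProj_mul_eq_zero_iff, hA.forall_mul_eq_zero_iff]
  have hdir : DirectedOn (fun p q => p * q = p) (hA.rightProj '' M) := by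
    rintro _ ⟨x, hx, rfl⟩ _ ⟨y, hy, rfl⟩
    have hxy : hA.rightProj x + hA.rightProj y ∈ M := by
      change f _ * q = 0
      rw [map_add, add_mul, hM x hx, hM y hy, add_zero]
    have hpx := hA.isProjElem_rightProj x
    have hpy := hA.isProjElem_rightProj y
    refine ⟨_, mem_image_of_mem _ hxy, hA.mul_rightProj_add hpx hpy, ?_⟩
    rw [add_comm]
    exact hA.mul_rightProj_add hpy hpx
  refine ⟨1 - hA.annProj M, (h _ _ ?_ hdir hlub).mul_eq_zero hq ?_, fun x hx => ?_⟩
  · rintro _ ⟨x, -, rfl⟩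
    exact hA.isProjElem_rightProj x
  · rintro _ ⟨_, ⟨x, hx, rfl⟩, rfl⟩
    exact hM x hx
  · rw [mul_sub, mul_one, hA.mul_annProj hx, sub_zero]

lemma exists_mul_eq_self_of_preservesProjLUB_pairwise (hA : AWStarAnnihilator A)
    (hB : AWStarAnnihilator B) (f : A →+* B) (hf : ∀ a, f (star a) = star (f a))
    (h : PreservesProjLUB f (·.Pairwise fun p q => p * q = 0)) {q : B} (hq : IsProjElem q) :
    ∃ r : A, f r * q = 0 ∧ ∀ x, f x * q = 0 → x * r = x := by
  obtain ⟨E, hEmax⟩ := exists_maximal_pairwise (fun e => IsProjElem e ∧ f e * q = 0)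
    fun p q : A => p * q = 0
  obtain ⟨hEproj, hEorth⟩ := hEmax.prop
  set r := 1 - hA.annProj E
  have hlub : IsProjLUB E r := hA.isProjLUB_one_sub_annProj E
  have hrq : f r * q = 0 := (h E r (fun e he => (hEproj e he).1) hEorth hlub).mul_eq_zero hq
    (forall_mem_image.mpr fun e he => (hEproj e he).2)
  refine ⟨r, hrq, fun x hx => mul_one_sub_eq_zero_iff.mp ?_⟩
  -- the support of `w` is orthogonal to `E` and killed by `f (·) * q`, so it already lies in `E`
  set w := x * (1 - r)
  have hwr : w * r = 0 := by rw [mul_assoc, sub_mul, one_mul, hlub.1.1, sub_self, mul_zero]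
  have hwq : f w * q = 0 := by
    rw [map_mul, map_sub, map_one, mul_assoc, sub_mul, one_mul, hrq, sub_zero, hx]
  set e := hA.rightProj w
  have he : IsProjElem e := hA.isProjElem_rightProj w
  have her : e * r = 0 := hA.rightProj_mul_eq_zero_iff.mpr hwr
  have heE : ∀ e' ∈ E, e * e' = 0 := fun e' he' => by
    rw [← ((hEproj e' he').1.mul_eq_self_comm hlub.1).mp (hlub.2.1 e' he'), ← mul_assoc, her,
      zero_mul]
  have heq : f e * q = 0 := by
    rw [map_rightProj_of_preservesProjLUB_pairwise hA hB f hf h, hB.rightProj_mul_eq_zero_iff, hwq]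
  have hins : (∀ e' ∈ insert e E, IsProjElem e' ∧ f e' * q = 0) ∧
      (insert e E).Pairwise fun p q => p * q = 0 :=
    ⟨forall_mem_insert.mpr ⟨⟨he, heq⟩, hEproj⟩, pairwise_insert.mpr ⟨hEorth,
      fun e' he' _ => ⟨heE e' he', he.mul_eq_zero_symm (hEproj e' he').1 (heE e' he')⟩⟩⟩
  have he0 : e = 0 := by
    rw [← her, hlub.2.1 e (hEmax.2 hins (subset_insert e E) (mem_insert e E))]
  have hwe : w * e = w := hA.mul_rightProj w
  rw [← hwe, he0, mul_zero]

end CStarAlgebra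

theorem awstar_morphism_tfae
    {A B : Type*} [CStarAlgebra A] [CStarAlgebra B]
    (hA : AWStarAnnihilator A) (hB : AWStarAnnihilator B)
    (f : A → B)
    (hadd : ∀ a b : A, f (a + b) = f a + f b)
    (hmul : ∀ a b : A, f (a * b) = f a * f b)
    (hone : f 1 = 1)
    (hstar : ∀ a : A, f (star a) = star (f a)) :
    List.TFAE
      [ -- (a) `f` preserves right annihilating projections
        (∀ (S : Set A) (p : A) (q : B), IsProjElem p → IsProjElem q →
          (∀ x : A, (∀ s ∈ S, s * x = 0) ↔ p * x = x) →
          (∀ y : B, (∀ s ∈ S, f s * y = 0) ↔ q * y = y) →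
          f p = q),
        -- (b) `f` preserves suprema of arbitrary families of projections
        (∀ (P : Set A) (p : A), (∀ q ∈ P, IsProjElem q) →
          IsProjLUB P p → IsProjLUB (f '' P) (f p)),
        -- (c) `f` preserves suprema of orthogonal families of projections
        (∀ (P : Set A) (p : A), (∀ q ∈ P, IsProjElem q) →
          (∀ q ∈ P, ∀ r ∈ P, q ≠ r → q * r = 0) →
          IsProjLUB P p → IsProjLUB (f '' P) (f p)),
        -- (d) `f` preserves suprema of directed families of projections
        (∀ (P : Set A) (p : A), (∀ q ∈ P, IsProjElem q) →
          (∀ q ∈ P, ∀ r ∈ P, ∃ s ∈ P, q * s = q ∧ r * s = r) →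
          IsProjLUB P p → IsProjLUB (f '' P) (f p)) ] := by
  let F : A →+* B := RingHom.mk' ⟨⟨f, hone⟩, hmul⟩ hadd
  have hF : ∀ a, F (star a) = star (F a) := hstar
  tfae_have 1 → 2 := fun h _ _ _ => PreservesAnnihilatorProj.isProjLUB_image hA hB (f := F) h
  tfae_have 2 → 3 := fun h P p hP _ => h P p hP
  tfae_have 2 → 4 := fun h P p hP _ => h P p hP
  -- `Set.Pairwise` and `DirectedOn` unfold to the hypotheses of (c) and (d)
  tfae_have 3 → 1 := fun h => preservesAnnihilatorProj_of_exists_mul_eq_self F hF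
    fun _ => exists_mul_eq_self_of_preservesProjLUB_pairwise hA hB F hF h
  tfae_have 4 → 1 := fun h => preservesAnnihilatorProj_of_exists_mul_eq_self F hF
    fun _ => exists_mul_eq_self_of_preservesProjLUB_directed hA hB F hF h
  tfae_finish
end

section
/- Let P be a bounded lattice equipped with an orthocomplementation, i.e., a map x ↦ xᗮ satisfying xᗮᗮ = x, x ≤ y → yᗮ ≤ xᗮ, x ⊔ xᗮ = ⊤, and x ⊓ xᗮ = ⊥, and suppose P is orthomodular: x ≤ y implies x ⊔ (xᗮ ⊓ y) = y. If every subset of P whose elements are pairwise orthogonal (x ≤ yᗮ for all distinct x, y in the subset) has a least upper bound in P, then every subset of P has a least upper bound; hence P is a complete lattice. -/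
/-!
Take a maximal pairwise orthogonal family `T` of lower bounds of the upper bounds of `S` (Zorn)
and let `p` be its supremum. Then `p` lies below every upper bound of `S`. If some `s ∈ S` were
not below `p`, orthomodularity would make `pᗮ ⊓ (s ⊔ p)` a nonzero element orthogonal to all
of `T` that could be added to `T`, contradicting maximality. So `p` is the supremum of `S`.
-/

open Set

theorem exists_maximal_pairwise_subset {α : Type*} (r : α → α → Prop) (A : Set α) :
    ∃ T, Maximal (fun T => T ⊆ A ∧ T.Pairwise r) T :=
  zorn_subset _ fun c hc hchain =>
    ⟨⋃₀ c, ⟨sUnion_subset fun _ ht => (hc ht).1,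
        (pairwise_sUnion hchain.directedOn).2 fun _ ht => (hc ht).2⟩,
      fun _ => subset_sUnion_of_mem⟩

section Orthocomplement

variable {P : Type*} {perp : P → P}

theorem le_perp_comm [LE P] (hinv : ∀ x, perp (perp x) = x)
    (hmono : ∀ x y : P, x ≤ y → perp y ≤ perp x) {x y : P} (h : x ≤ perp y) : y ≤ perp x :=
  hinv y ▸ hmono _ _ h

theorem perp_inf_ne_bot_of_lt [Lattice P] [OrderBot P]
    (horthomodular : ∀ x y : P, x ≤ y → x ⊔ (perp x ⊓ y) = y)
    {p q : P} (hpq : p < q) : perp p ⊓ q ≠ ⊥ := by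
  intro hbot
  have hq := horthomodular p q hpq.le
  rw [hbot, sup_bot_eq] at hq
  exact hpq.ne hq

theorem isLUB_of_maximal_orthogonal [Lattice P] [OrderBot P] (hinv : ∀ x, perp (perp x) = x)
    (hmono : ∀ x y : P, x ≤ y → perp y ≤ perp x) (hinf : ∀ x : P, x ⊓ perp x = ⊥)
    (horthomodular : ∀ x y : P, x ≤ y → x ⊔ (perp x ⊓ y) = y) {S T : Set P}
    (hT : Maximal (fun T => T ⊆ lowerBounds (upperBounds S) ∧ T.Pairwise (· ≤ perp ·)) T)
    {p : P} (hp : IsLUB T p) : IsLUB S p := by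
  have hp_low : p ∈ lowerBounds (upperBounds S) := fun u hu =>
    hp.2 fun t ht => hT.prop.1 ht hu
  refine ⟨fun s hs => ?_, hp_low⟩
  by_contra hsp
  set c := perp p ⊓ (s ⊔ p)
  have hc_ne : c ≠ ⊥ := perp_inf_ne_bot_of_lt horthomodular (right_lt_sup.2 hsp)
  have hc_low : c ∈ lowerBounds (upperBounds S) := fun u hu =>
    inf_le_right.trans (sup_le (hu hs) (hp_low hu))
  have hc_orth : ∀ t ∈ T, c ≤ perp t ∧ t ≤ perp c := fun t ht =>
    have hct : c ≤ perp t := inf_le_left.trans (hmono _ _ (hp.1 ht))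
    ⟨hct, le_perp_comm hinv hmono hct⟩
  have hcT : c ∈ T := hT.mem_of_prop_insert
    ⟨insert_subset hc_low hT.prop.1, pairwise_insert.2 ⟨hT.prop.2, fun t ht _ => hc_orth t ht⟩⟩
  exact hc_ne (le_bot_iff.1 (hinf p ▸ le_inf (hp.1 hcT) inf_le_left))

end Orthocomplement

theorem orthomodular_complete_of_orthogonal_sups_general
    {P : Type*} [Lattice P] [BoundedOrder P]
    (perp : P → P)
    (hinv : ∀ x, perp (perp x) = x)
    (hmono : ∀ x y : P, x ≤ y → perp y ≤ perp x)
    (hinf : ∀ x : P, x ⊓ perp x = ⊥)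
    (horthomodular : ∀ x y : P, x ≤ y → x ⊔ (perp x ⊓ y) = y)
    (horth : ∀ S : Set P,
      (∀ x ∈ S, ∀ y ∈ S, x ≠ y → x ≤ perp y) → ∃ p, IsLUB S p) :
    ∀ S : Set P, ∃ p, IsLUB S p := by
  intro S
  obtain ⟨T, hT⟩ :=
    exists_maximal_pairwise_subset (· ≤ perp ·) (lowerBounds (upperBounds S))
  obtain ⟨p, hp⟩ := horth T hT.prop.2
  exact ⟨p, isLUB_of_maximal_orthogonal hinv hmono hinf horthomodular hT hp⟩

theorem orthomodular_complete_of_orthogonal_sups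
    {P : Type*} [Lattice P] [BoundedOrder P]
    (perp : P → P)
    (hinv : ∀ x, perp (perp x) = x)
    (hmono : ∀ x y : P, x ≤ y → perp y ≤ perp x)
    (hsup : ∀ x : P, x ⊔ perp x = ⊤)
    (hinf : ∀ x : P, x ⊓ perp x = ⊥)
    (horthomodular : ∀ x y : P, x ≤ y → x ⊔ (perp x ⊓ y) = y)
    (horth : ∀ S : Set P,
      (∀ x ∈ S, ∀ y ∈ S, x ≠ y → x ≤ perp y) → ∃ p, IsLUB S p) :
    ∀ S : Set P, ∃ p, IsLUB S p :=
  orthomodular_complete_of_orthogonal_sups_general perp hinv hmono hinf horthomodular horth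
end

section
/- Let P and Q be complete lattices, each equipped with an orthocomplementation (an order-reversing involution x ↦ xᗮ with x ⊔ xᗮ = ⊤ and x ⊓ xᗮ = ⊥) and each orthomodular (x ≤ y implies x ⊔ (xᗮ ⊓ y) = y). Let f : P → Q be a function that preserves orthocomplements (f(xᗮ) = f(x)ᗮ), preserves binary joins (f(x ⊔ y) = f(x) ⊔ f(y)), and preserves suprema of orthogonal subsets (f(sSup S) = sSup (f '' S) whenever the elements of S ⊆ P are pairwise orthogonal). Then f preserves arbitrary suprema: f(sSup S) = sSup (f '' S) for every subset S ⊆ P. -/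
/-!
Well-order the index set and orthogonalize the family Gram–Schmidt style: the increment at `i`
is `(⨆ j < i, x j)ᗮ ⊓ ((⨆ j < i, x j) ⊔ x i)`. Increments are pairwise orthogonal, and
orthomodularity says that joining the predecessors of `i` with the increment at `i` gives the
same as joining them with `x i`; so, by well-founded induction, the increments below `i` have
the same join as the `x j` below `i`. Joins of increments are orthogonal joins, which `f`
preserves, and each increment lies under a partial join that, by induction again, `f` maps
under `⨆ j, f (x j)`.
-/

theorem biSup_lt_sup_le_biSup_lt {α ι : Type*} [CompleteLattice α] [Preorder ι] (y : ι → α)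
    {i k : ι} (h : i < k) : (⨆ j < i, y j) ⊔ y i ≤ ⨆ j < k, y j :=
  sup_le (biSup_mono fun _ hj => hj.trans h) (le_biSup y h)

theorem biSup_lt_sup_le_iSup {α ι : Type*} [CompleteLattice α] [LT ι] (y : ι → α) (i : ι) :
    (⨆ j < i, y j) ⊔ y i ≤ ⨆ j, y j :=
  sup_le (iSup₂_le_iSup _ y) (le_iSup y i)

theorem le_perp_comm_s2 {α : Type*} [Preorder α] {perp : α → α} (hinv : Function.Involutive perp)
    (hanti : Antitone perp) {a b : α} (h : a ≤ perp b) : b ≤ perp a := by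
  simpa only [hinv b] using hanti h

section Orthogonalization

variable {α ι : Type*} [CompleteLattice α] [LinearOrder ι] (perp : α → α) (x : ι → α)

def orthoIncrement (i : ι) : α :=
  perp (⨆ j < i, x j) ⊓ ((⨆ j < i, x j) ⊔ x i)

theorem orthoIncrement_le (i : ι) : orthoIncrement perp x i ≤ (⨆ j < i, x j) ⊔ x i :=
  inf_le_right

theorem biSup_lt_sup_orthoIncrement (hom : ∀ a b, a ≤ b → a ⊔ (perp a ⊓ b) = b) (i : ι) :
    (⨆ j < i, x j) ⊔ orthoIncrement perp x i = (⨆ j < i, x j) ⊔ x i :=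
  hom _ _ le_sup_left

theorem pairwise_orthoIncrement_le_perp (hinv : Function.Involutive perp) (hanti : Antitone perp) :
    Pairwise fun i k => orthoIncrement perp x i ≤ perp (orthoIncrement perp x k) := by
  have of_lt : ∀ {i k}, i < k → orthoIncrement perp x i ≤ perp (orthoIncrement perp x k) :=
    fun h => (orthoIncrement_le perp x _).trans <|
      (biSup_lt_sup_le_biSup_lt x h).trans (le_perp_comm_s2 hinv hanti inf_le_left)
  intro i k hne
  rcases hne.lt_or_gt with h | h
  · exact of_lt h
  · exact le_perp_comm_s2 hinv hanti (of_lt h)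

theorem biSup_lt_orthoIncrement [WellFoundedLT ι] (hom : ∀ a b, a ≤ b → a ⊔ (perp a ⊓ b) = b)
    (i : ι) : ⨆ j < i, orthoIncrement perp x j = ⨆ j < i, x j := by
  induction i using WellFoundedLT.induction with
  | _ i ih =>
    refine le_antisymm (iSup₂_le fun j hj => ?_) (iSup₂_le fun j hj => ?_)
    · exact (orthoIncrement_le perp x j).trans (biSup_lt_sup_le_biSup_lt x hj)
    · calc x j ≤ (⨆ k < j, x k) ⊔ x j := le_sup_right
        _ = (⨆ k < j, orthoIncrement perp x k) ⊔ orthoIncrement perp x j := by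
          rw [ih j hj, biSup_lt_sup_orthoIncrement perp x hom]
        _ ≤ ⨆ k < i, orthoIncrement perp x k := biSup_lt_sup_le_biSup_lt _ hj

theorem iSup_orthoIncrement [WellFoundedLT ι] (hom : ∀ a b, a ≤ b → a ⊔ (perp a ⊓ b) = b) :
    ⨆ i, orthoIncrement perp x i = ⨆ i, x i := by
  refine le_antisymm (iSup_le fun i => ?_) (iSup_le fun i => ?_)
  · exact (orthoIncrement_le perp x i).trans (biSup_lt_sup_le_iSup x i)
  · calc x i ≤ (⨆ j < i, x j) ⊔ x i := le_sup_right
      _ = (⨆ j < i, orthoIncrement perp x j) ⊔ orthoIncrement perp x i := by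
        rw [biSup_lt_orthoIncrement perp x hom, biSup_lt_sup_orthoIncrement perp x hom]
      _ ≤ ⨆ j, orthoIncrement perp x j := biSup_lt_sup_le_iSup _ i

end Orthogonalization

section OrthogonalJoins

variable {α β ι : Type*} [CompleteLattice α] [CompleteLattice β] {perp : α → α} {f : α → β}

theorem monotone_of_map_sup (hjoin : ∀ a b, f (a ⊔ b) = f a ⊔ f b) : Monotone f :=
  fun a b h => le_sup_left.trans_eq (by rw [← hjoin, sup_eq_right.2 h])

theorem map_biSup_le_of_pairwise
    (horth : ∀ S : Set α, S.Pairwise (fun a b => a ≤ perp b) → f (sSup S) = sSup (f '' S))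
    {g : ι → α} (hg : Pairwise fun i k => g i ≤ perp (g k)) {T : Set ι} {u : β}
    (hu : ∀ i ∈ T, f (g i) ≤ u) : f (⨆ i ∈ T, g i) ≤ u := by
  have hpair : (g '' T).Pairwise fun a b => a ≤ perp b := by
    rintro _ ⟨i, -, rfl⟩ _ ⟨k, -, rfl⟩ hne
    exact hg (ne_of_apply_ne g hne)
  rw [← sSup_image, horth _ hpair, Set.image_image]
  exact sSup_le (Set.forall_mem_image.2 hu)

theorem map_biSup_lt_sup_le_iSup [LinearOrder ι] [WellFoundedLT ι]
    (hinv : Function.Involutive perp) (hanti : Antitone perp)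
    (hom : ∀ a b, a ≤ b → a ⊔ (perp a ⊓ b) = b) (hjoin : ∀ a b, f (a ⊔ b) = f a ⊔ f b)
    (horth : ∀ S : Set α, S.Pairwise (fun a b => a ≤ perp b) → f (sSup S) = sSup (f '' S))
    (x : ι → α) (i : ι) : f ((⨆ j < i, x j) ⊔ x i) ≤ ⨆ j, f (x j) := by
  induction i using WellFoundedLT.induction with
  | _ i ih =>
    rw [hjoin, ← biSup_lt_orthoIncrement perp x hom]
    refine sup_le ?_ (le_iSup (fun j => f (x j)) i)
    refine map_biSup_le_of_pairwise horth (pairwise_orthoIncrement_le_perp perp x hinv hanti)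
      fun j hj => ?_
    exact (monotone_of_map_sup hjoin (orthoIncrement_le perp x j)).trans (ih j hj)

theorem map_iSup_of_orthomodular (hinv : Function.Involutive perp) (hanti : Antitone perp)
    (hom : ∀ a b, a ≤ b → a ⊔ (perp a ⊓ b) = b) (hjoin : ∀ a b, f (a ⊔ b) = f a ⊔ f b)
    (horth : ∀ S : Set α, S.Pairwise (fun a b => a ≤ perp b) → f (sSup S) = sSup (f '' S))
    (x : ι → α) : f (⨆ i, x i) = ⨆ i, f (x i) := by
  obtain ⟨_, _⟩ := exists_wellFoundedLT ι
  have hmono := monotone_of_map_sup hjoin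
  refine le_antisymm ?_ hmono.le_map_iSup
  rw [← iSup_orthoIncrement perp x hom, ← iSup_univ]
  refine map_biSup_le_of_pairwise horth (pairwise_orthoIncrement_le_perp perp x hinv hanti)
    fun i _ => ?_
  exact (hmono (orthoIncrement_le perp x i)).trans
    (map_biSup_lt_sup_le_iSup hinv hanti hom hjoin horth x i)

end OrthogonalJoins

theorem orthomodular_map_preserves_sups_general
    {P Q : Type*} [CompleteLattice P] [CompleteLattice Q]
    (perpP : P → P)
    (hinvP : ∀ x, perpP (perpP x) = x)
    (hmonoP : ∀ x y : P, x ≤ y → perpP y ≤ perpP x)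
    (homP : ∀ x y : P, x ≤ y → x ⊔ (perpP x ⊓ y) = y)
    (f : P → Q)
    (hjoin : ∀ x y : P, f (x ⊔ y) = f x ⊔ f y)
    (horth : ∀ S : Set P, (∀ x ∈ S, ∀ y ∈ S, x ≠ y → x ≤ perpP y) →
      f (sSup S) = sSup (f '' S)) :
    ∀ S : Set P, f (sSup S) = sSup (f '' S) := by
  intro S
  rw [sSup_eq_iSup', sSup_image']
  exact map_iSup_of_orthomodular hinvP (fun a b => hmonoP a b) homP hjoin horth _

theorem orthomodular_map_preserves_sups
    {P Q : Type*} [CompleteLattice P] [CompleteLattice Q]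
    (perpP : P → P) (perpQ : Q → Q)
    (hinvP : ∀ x, perpP (perpP x) = x)
    (hmonoP : ∀ x y : P, x ≤ y → perpP y ≤ perpP x)
    (hsupP : ∀ x : P, x ⊔ perpP x = ⊤)
    (hinfP : ∀ x : P, x ⊓ perpP x = ⊥)
    (homP : ∀ x y : P, x ≤ y → x ⊔ (perpP x ⊓ y) = y)
    (hinvQ : ∀ x, perpQ (perpQ x) = x)
    (hmonoQ : ∀ x y : Q, x ≤ y → perpQ y ≤ perpQ x)
    (hsupQ : ∀ x : Q, x ⊔ perpQ x = ⊤)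
    (hinfQ : ∀ x : Q, x ⊓ perpQ x = ⊥)
    (homQ : ∀ x y : Q, x ≤ y → x ⊔ (perpQ x ⊓ y) = y)
    (f : P → Q)
    (hperp : ∀ x, f (perpP x) = perpQ (f x))
    (hjoin : ∀ x y : P, f (x ⊔ y) = f x ⊔ f y)
    (horth : ∀ S : Set P, (∀ x ∈ S, ∀ y ∈ S, x ≠ y → x ≤ perpP y) →
      f (sSup S) = sSup (f '' S)) :
    ∀ S : Set P, f (sSup S) = sSup (f '' S) :=
  orthomodular_map_preserves_sups_general perpP hinvP hmonoP homP f hjoin horth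
end

section
/- Let A and B be unital C*-algebras over ℂ and let f : A → B be a unital *-ring homomorphism (additive, multiplicative, f(1) = 1, f(a*) = f(a)*, but not assumed ℂ-linear). Then there exists a unique function g : A → B such that: g is ℂ-linear; g(a*) = g(a)* for all a ∈ A; g(a²) = g(a)² for all a ∈ A (so g is a Jordan *-homomorphism); and g(a) = f(a) for every self-adjoint a ∈ A. -/
/-!
Additivity makes `f` `ℚ`-linear, and a `*`-ring homomorphism is monotone for the spectral order.
For `0 ≤ a` and rational `q > ‖a‖` this gives `0 ≤ f a ≤ q • f 1`; as `f 1` is a projection,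
`‖f a‖ ≤ ‖a‖`, and the C⋆-identity extends the bound to all `a`. So `f` is continuous, hence
`ℝ`-linear, and `g a = f (ℜ a) + I • f (ℑ a)` is `ℂ`-linear; since `f` is a `*`-ring homomorphism,
`g` preserves the star and squares. Uniqueness holds because the self-adjoint elements span `A`.
-/

open ComplexStarModule Complex

namespace NonUnitalStarRingHom

variable {A B : Type*} [CStarAlgebra A] [NonUnitalCStarAlgebra B]

lemma norm_apply_le_of_nonneg [PartialOrder A] [StarOrderedRing A] [PartialOrder B]
    [StarOrderedRing B] (φ : A →⋆ₙ+* B) {a : A} (ha : 0 ≤ a) : ‖φ a‖ ≤ ‖a‖ := by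
  refine le_of_forall_lt_rat_imp_le fun q hq => ?_
  have hq₀ : (0 : ℝ) ≤ q := (norm_nonneg a).trans hq.le
  have hφa : 0 ≤ φ a := by simpa using OrderHomClass.mono φ ha
  have hle : φ a ≤ (q : ℝ) • φ 1 :=
    calc φ a ≤ φ ((q : ℝ) • 1) := by
          gcongr
          rw [← Algebra.algebraMap_eq_smul_one]
          exact (CStarAlgebra.norm_le_iff_le_algebraMap a hq₀ ha).1 hq.le
      _ = (q : ℝ) • φ 1 := map_ratCast_smul φ ℝ ℝ q 1
  calc ‖φ a‖ ≤ ‖(q : ℝ) • φ 1‖ := CStarAlgebra.norm_le_norm_of_nonneg_of_le hφa hle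
    _ = q * ‖φ 1‖ := by rw [norm_smul, Real.norm_of_nonneg hq₀]
    _ ≤ q := mul_le_of_le_one_right hq₀ ((IsStarProjection.one A).map φ |>.norm_le)

lemma norm_apply_le (φ : A →⋆ₙ+* B) (a : A) : ‖φ a‖ ≤ ‖a‖ := by
  let := CStarAlgebra.spectralOrder A
  let := CStarAlgebra.spectralOrderedRing A
  let := CStarAlgebra.spectralOrder B
  let := CStarAlgebra.spectralOrderedRing B
  have h := norm_apply_le_of_nonneg φ (star_mul_self_nonneg a)
  rw [map_mul, map_star, CStarRing.norm_star_mul_self, CStarRing.norm_star_mul_self] at h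
  exact (mul_self_le_mul_self_iff (norm_nonneg _) (norm_nonneg _)).2 h

lemma continuous (φ : A →⋆ₙ+* B) : Continuous φ :=
  AddMonoidHomClass.continuous_of_bound φ 1 fun a => by simpa using norm_apply_le φ a

end NonUnitalStarRingHom

lemma exists_isSelfAdjoint_add_I_smul_eq {A : Type*} [AddCommGroup A] [Module ℂ A]
    [StarAddMonoid A] [StarModule ℂ A] (a : A) :
    ∃ x y : A, IsSelfAdjoint x ∧ IsSelfAdjoint y ∧ x + I • y = a :=
  ⟨_, _, (ℜ a).2, (ℑ a).2, realPart_add_I_smul_imaginaryPart a⟩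

namespace LinearMap

section Module

variable {A B : Type*} [AddCommGroup A] [Module ℂ A] [StarAddMonoid A] [StarModule ℂ A]
  [AddCommGroup B] [Module ℂ B]

noncomputable def complexification (f : A →ₗ[ℝ] B) : A →ₗ[ℂ] B where
  toFun a := f (ℜ a) + I • f (ℑ a)
  map_add' a b := by simp only [map_add, AddSubgroup.coe_add, smul_add]; abel
  map_smul' z a := by
    simp only [realPart_smul, imaginaryPart_smul, AddSubgroup.coe_add, AddSubgroup.coe_sub,
      selfAdjoint.val_smul, map_add, map_sub, map_smul, RingHom.id_apply]
    conv_rhs => rw [← re_add_im z]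
    match_scalars <;> simp [Complex.ext_iff]

lemma complexification_apply (f : A →ₗ[ℝ] B) (a : A) :
    f.complexification a = f (ℜ a) + I • f (ℑ a) := rfl

variable (f : A →ₗ[ℝ] B)

lemma complexification_apply_add_I_smul {x y : A} (hx : IsSelfAdjoint x) (hy : IsSelfAdjoint y) :
    f.complexification (x + I • y) = f x + I • f y := by
  simp [complexification_apply, hx.coe_realPart, hy.coe_realPart, hx.imaginaryPart,
    hy.imaginaryPart]

lemma complexification_apply_of_isSelfAdjoint {x : A} (hx : IsSelfAdjoint x) :
    f.complexification x = f x := by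
  simpa using f.complexification_apply_add_I_smul hx (.zero A)

lemma complexification_star [StarAddMonoid B] [StarModule ℂ B]
    (hf : ∀ a, f (star a) = star (f a)) (a : A) :
    f.complexification (star a) = star (f.complexification a) := by
  obtain ⟨x, y, hx, hy, rfl⟩ := exists_isSelfAdjoint_add_I_smul_eq a
  have hstar : star (x + I • y) = x + I • -y := by
    simp [hx.star_eq, hy.star_eq]
  rw [hstar, f.complexification_apply_add_I_smul hx hy.neg,
    f.complexification_apply_add_I_smul hx hy]
  simp [← hf, hx.star_eq, hy.star_eq]

end Module

section Algebra

variable {A B : Type*} [Ring A] [StarRing A] [Algebra ℂ A] [StarModule ℂ A]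
  [Ring B] [Algebra ℂ B]

lemma complexification_sq (f : A →ₗ[ℝ] B) (hf : ∀ x y, f (x * y) = f x * f y) (a : A) :
    f.complexification (a ^ 2) = f.complexification a ^ 2 := by
  obtain ⟨x, y, hx, hy, rfl⟩ := exists_isSelfAdjoint_add_I_smul_eq a
  have hsq : (x + I • y) ^ 2 = (x * x - y * y) + I • (x * y + y * x) := by
    simp only [sq, mul_add, add_mul, mul_smul_comm, smul_mul_assoc, smul_smul, I_mul_I,
      neg_one_smul, smul_add]
    abel
  have hre : IsSelfAdjoint (x * x - y * y) := by
    simp [IsSelfAdjoint, hx.star_eq, hy.star_eq]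
  have him : IsSelfAdjoint (x * y + y * x) := by
    simp [IsSelfAdjoint, hx.star_eq, hy.star_eq, add_comm]
  rw [hsq, f.complexification_apply_add_I_smul hre him, f.complexification_apply_add_I_smul hx hy]
  simp only [map_sub, map_add, hf, sq, mul_add, add_mul, mul_smul_comm, smul_mul_assoc,
    smul_smul, I_mul_I, neg_one_smul, smul_add]
  abel

end Algebra

end LinearMap

theorem jordan_star_hom_of_star_ring_hom_general
    {A B : Type*} [CStarAlgebra A] [CStarAlgebra B]
    (f : A → B)
    (hadd : ∀ a b : A, f (a + b) = f a + f b)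
    (hmul : ∀ a b : A, f (a * b) = f a * f b)
    (hstar : ∀ a : A, f (star a) = star (f a)) :
    ∃! g : A →ₗ[ℂ] B,
      (∀ a : A, g (star a) = star (g a)) ∧
      (∀ a : A, g (a ^ 2) = (g a) ^ 2) ∧
      (∀ a : A, IsSelfAdjoint a → g a = f a) := by
  let φ : A →⋆ₙ+* B :=
    { AddMonoidHom.mk' f hadd with map_mul' := hmul, map_star' := hstar }
  let fℝ : A →ₗ[ℝ] B := (AddMonoidHom.toRealLinearMap φ φ.continuous).toLinearMap
  refine ⟨fℝ.complexification,
    ⟨fℝ.complexification_star hstar, fℝ.complexification_sq hmul,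
      fun a ha => fℝ.complexification_apply_of_isSelfAdjoint ha⟩, ?_⟩
  rintro g ⟨-, -, hg⟩
  exact LinearMap.ext_on span_selfAdjoint fun a ha =>
    (hg a ha).trans (fℝ.complexification_apply_of_isSelfAdjoint ha).symm

/-- A unital `*`-ring homomorphism between C*-algebras agrees on self-adjoint
elements with a unique Jordan `*`-homomorphism. -/
theorem jordan_star_hom_of_star_ring_hom
    {A B : Type*} [CStarAlgebra A] [CStarAlgebra B]
    (f : A → B)
    (hadd : ∀ a b : A, f (a + b) = f a + f b)
    (hmul : ∀ a b : A, f (a * b) = f a * f b)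
    (hone : f 1 = 1)
    (hstar : ∀ a : A, f (star a) = star (f a)) :
    ∃! g : A →ₗ[ℂ] B,
      (∀ a : A, g (star a) = star (g a)) ∧
      (∀ a : A, g (a ^ 2) = (g a) ^ 2) ∧
      (∀ a : A, IsSelfAdjoint a → g a = f a) :=
  jordan_star_hom_of_star_ring_hom_general f hadd hmul hstar
end

section
/- Let X be an extremally disconnected compact Hausdorff topological space and let b : X → ℝ be continuous. Then there exists a continuous function u : X → ℝ with u(x)² = 1 for all x ∈ X (i.e., u is a self-adjoint unitary, a symmetry, in C(X,ℝ)) such that b = u · |b|, where |b| denotes the pointwise absolute value of b, which is the unique nonnegative continuous square root of b². -/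
/-!
The closure `C` of the open set `{b > 0}` is clopen, because `X` is extremally disconnected,
so the function equal to `1` on `C` and to `-1` off `C` is a continuous symmetry. It is the
sign of `b` wherever `b ≠ 0`: `b > 0` on `{b > 0} ⊆ C`, while `b ≥ 0` on all of `C` by continuity.
-/

namespace ContinuousMap

variable {X : Type*} [TopologicalSpace X]

noncomputable def clopenSign {C : Set X} (hC : IsClopen C) : C(X, ℝ) where
  toFun := by classical exact C.piecewise (fun _ ↦ 1) (fun _ ↦ -1)
  continuous_toFun := by
    classical
    exact continuous_const.piecewise (by simp [hC.frontier_eq]) continuous_const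

variable {C : Set X} (hC : IsClopen C)

theorem clopenSign_sq (x : X) : clopenSign hC x ^ 2 = 1 := by
  classical
  by_cases hx : x ∈ C <;> simp [clopenSign, hx]

theorem eq_clopenSign_mul_abs {f : X → ℝ} (hpos : {x | 0 < f x} ⊆ C)
    (hnonneg : C ⊆ {x | 0 ≤ f x}) (x : X) : f x = clopenSign hC x * |f x| := by
  classical
  by_cases hx : x ∈ C
  · simp [clopenSign, hx, abs_of_nonneg (show 0 ≤ f x from hnonneg hx)]
  · have hfx : f x ≤ 0 := not_lt.mp fun h ↦ hx (hpos h)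
    simp [clopenSign, hx, abs_of_nonpos hfx]

end ContinuousMap

theorem IsOpen.isClopen_closure {X : Type*} [TopologicalSpace X] [ExtremallyDisconnected X]
    {U : Set X} (hU : IsOpen U) : IsClopen (closure U) :=
  ⟨isClosed_closure, ExtremallyDisconnected.open_closure U hU⟩

theorem exists_symmetry_mul_abs_general
    {X : Type*} [TopologicalSpace X]
    [ExtremallyDisconnected X]
    (b : C(X, ℝ)) :
    ∃ u : C(X, ℝ), (∀ x : X, u x ^ 2 = 1) ∧ ∀ x : X, b x = u x * |b x| := by
  have hC : IsClopen (closure {x | 0 < b x}) :=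
    (isOpen_lt continuous_const b.continuous).isClopen_closure
  exact ⟨ContinuousMap.clopenSign hC, ContinuousMap.clopenSign_sq hC,
    ContinuousMap.eq_clopenSign_mul_abs hC subset_closure
      (closure_lt_subset_le continuous_const b.continuous)⟩

/-- On an extremally disconnected compact Hausdorff space, every continuous
real-valued function `b` factors as `b = u * |b|` for a continuous symmetry
`u` (a function with `u x ^ 2 = 1` everywhere). -/
theorem exists_symmetry_mul_abs
    {X : Type*} [TopologicalSpace X] [CompactSpace X] [T2Space X]
    [ExtremallyDisconnected X]
    (b : C(X, ℝ)) :
    ∃ u : C(X, ℝ), (∀ x : X, u x ^ 2 = 1) ∧ ∀ x : X, b x = u x * |b x| :=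
  exists_symmetry_mul_abs_general b
end

section
/- Let X be an extremally disconnected compact Hausdorff topological space and let n ≥ 2 be a natural number. In the group of unitary n×n matrices over C(X,ℂ), the subgroup generated by the set of self-adjoint unitary matrices (symmetries) is exactly the set of unitary matrices u with (det u)² = 1. -/
/-!
A symmetry `s` satisfies `s * s = 1`, so `(det s)² = 1`, and this persists in the subgroup the
symmetries generate.

Conversely, `u` is brought to diagonal form by symmetries, one column at a time. The `k`-th
column `c` is a unit vector at each point of `X`; write `c_k = μ |c_k|` with `|μ| = 1`. Pointwise,
the Householder reflection in `c - μ e_k` is a symmetry sending `c` to `μ e_k` and fixing every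
`e_i` with `c_i = 0`; since the product is unitary, its `k`-th row is then `μ e_kᵀ` as well.
Neither `μ` nor the reflection is continuous across the boundary of the set where it is
nondegenerate. But `X` is extremally disconnected, hence projective (Gleason), so bounded
continuous maps on a dense open subset of `X` extend continuously to `X`, and all the properties
above are closed conditions.

A diagonal unitary `diag d` with `(∏ d)² = 1` is the symmetry `diag (1, …, ∏ d, …, 1)` (entry
`i₀`) times the matrices `diag (1, …, a, …, a⁻¹, …, 1)` (entries `i` and `i₀`). Each of these is
the commutator of `diag (1, …, a, …, 1)` with the swap matrix of `i` and `i₀`, hence a product of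
two symmetries.
-/

open Set Function Matrix ComplexConjugate

universe u v

def symmetrySubgroup (A : Type*) [Monoid A] [StarMul A] : Subgroup (unitary A) :=
  Subgroup.closure {v | star (v : A) = v}

theorem mul_mul_inv_mul_mem_symmetrySubgroup {A : Type*} [Monoid A] [StarMul A] (u : unitary A)
    {v : unitary A} (hv : star (v : A) = v) : u * v * u⁻¹ * v ∈ symmetrySubgroup A := by
  refine mul_mem (Subgroup.subset_closure ?_) (Subgroup.subset_closure hv)
  simp [← Unitary.star_eq_inv, star_mul, hv, mul_assoc]

namespace Matrix

variable {ι R : Type*} [Fintype ι] [DecidableEq ι]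

theorem swap_mul_diagonal_mul_swap [Semiring R] (i j : ι) (d : ι → R) :
    swap R i j * diagonal d * swap R i j = diagonal (d ∘ Equiv.swap i j) := by
  rw [swap, PEquiv.toMatrix_toPEquiv_mul, PEquiv.mul_toMatrix_toPEquiv, submatrix_submatrix]
  simp [submatrix_diagonal_equiv]

section Unitary

variable [Ring R] [StarRing R]

theorem row_eq_zero_of_col_eq_zero_of_mem_unitary {U : Matrix ι ι R}
    (hU : U ∈ unitary (Matrix ι ι R)) {k : ι} (hkk : IsUnit (U k k))
    (hcol : ∀ i ≠ k, U i k = 0) {j : ι} (hj : j ≠ k) : U k j = 0 := by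
  have h : (star U * U) j k = (1 : Matrix ι ι R) j k := by rw [Unitary.star_mul_self_of_mem hU]
  rw [mul_apply, Finset.sum_eq_single k (fun i _ hi => by rw [hcol i hi, mul_zero]) (by simp),
    one_apply_ne hj, star_apply] at h
  exact star_eq_zero.mp (hkk.mul_left_eq_zero.mp h)

theorem commute_single_of_mem_unitary {U : Matrix ι ι R} (hU : U ∈ unitary (Matrix ι ι R))
    {k : ι} (hkk : IsUnit (U k k)) (hcol : ∀ i ≠ k, U i k = 0) : Commute (single k k 1) U := by
  refine Matrix.ext fun a b => ?_
  by_cases ha : a = k <;> by_cases hb : b = k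
  · subst ha hb
    simp
  · rw [ha, single_mul_apply_same, mul_single_apply_of_ne (hbj := hb), one_mul,
      row_eq_zero_of_col_eq_zero_of_mem_unitary hU hkk hcol hb]
  · rw [hb, single_mul_apply_of_ne (h := ha), mul_single_apply_same, mul_one, hcol a ha]
  · rw [single_mul_apply_of_ne (h := ha), mul_single_apply_of_ne (hbj := hb)]

end Unitary

section CommRing

variable [CommRing R] [StarRing R]

theorem det_sq_eq_one_of_mem_symmetrySubgroup {u : unitary (Matrix ι ι R)}
    (hu : u ∈ symmetrySubgroup (Matrix ι ι R)) : (u : Matrix ι ι R).det ^ 2 = 1 := by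
  induction hu using Subgroup.closure_induction with
  | mem v hv =>
    have hvv := Unitary.coe_star_mul_self v
    rw [show star (v : Matrix ι ι R) = v from hv] at hvv
    rw [sq, ← det_mul, hvv, det_one]
  | one => simp
  | mul v w _ _ hv hw => rw [Submonoid.coe_mul, det_mul, mul_pow, hv, hw, one_mul]
  | inv v _ hv =>
    rw [← Unitary.star_eq_inv, Unitary.coe_star, star_eq_conjTranspose, det_conjTranspose,
      ← star_pow, hv, star_one]

def diagonalUnitary : (ι → unitary R) →* unitary (Matrix ι ι R) where
  toFun d := ⟨diagonal fun i => (d i : R), by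
    simp [Unitary.mem_iff, star_eq_conjTranspose, diagonal_conjTranspose, diagonal_mul_diagonal]⟩
  map_one' := by ext : 1; simp
  map_mul' d e := by ext : 1; simp [diagonal_mul_diagonal]

variable (R) in
def swapUnitary (i j : ι) : unitary (Matrix ι ι R) :=
  ⟨swap R i j, by simp [Unitary.mem_iff, star_eq_conjTranspose, swap_mul_self]⟩

theorem swapUnitary_mul_diagonalUnitary_mul_swapUnitary (i j : ι) (d : ι → unitary R) :
    swapUnitary R i j * diagonalUnitary d * swapUnitary R i j =
      diagonalUnitary (d ∘ Equiv.swap i j) :=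
  Subtype.ext (swap_mul_diagonal_mul_swap i j _)

theorem diagonalUnitary_mulSingle_mul_mulSingle_inv_mem (i j : ι) (a : unitary R) :
    diagonalUnitary (Pi.mulSingle i a * Pi.mulSingle j a⁻¹) ∈
      symmetrySubgroup (Matrix ι ι R) := by
  have hS : star (swapUnitary R i j : Matrix ι ι R) = swapUnitary R i j := by
    simp [swapUnitary, star_eq_conjTranspose]
  convert mul_mul_inv_mul_mem_symmetrySubgroup (diagonalUnitary (Pi.mulSingle i a)) hS using 1
  rw [mul_assoc, mul_assoc, ← mul_assoc (swapUnitary R i j), ← map_inv, ← Pi.mulSingle_inv,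
    swapUnitary_mul_diagonalUnitary_mul_swapUnitary, Pi.mulSingle_comp_equiv, Equiv.symm_swap,
    Equiv.swap_apply_left, map_mul]

theorem diagonalUnitary_mulSingle_mem {i : ι} {a : unitary R} (ha : a ^ 2 = 1) :
    diagonalUnitary (Pi.mulSingle i a) ∈ symmetrySubgroup (Matrix ι ι R) := by
  apply Subgroup.subset_closure
  change star ((diagonalUnitary (Pi.mulSingle i a) : unitary _) : Matrix ι ι R) = _
  rw [← Unitary.coe_star, Unitary.star_eq_inv, ← map_inv, ← Pi.mulSingle_inv,
    inv_eq_of_mul_eq_one_right (by rwa [← sq])]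

theorem diagonalUnitary_mem_symmetrySubgroup {d : ι → unitary R} (hd : (∏ i, d i) ^ 2 = 1) :
    diagonalUnitary d ∈ symmetrySubgroup (Matrix ι ι R) := by
  cases isEmpty_or_nonempty ι
  · rw [Subsingleton.elim d 1, map_one]
    exact one_mem _
  obtain ⟨i₀⟩ := ‹Nonempty ι›
  have hdecomp : d = Pi.mulSingle i₀ (∏ i, d i) *
      ∏ i, (Pi.mulSingle i (d i) * Pi.mulSingle i₀ (d i)⁻¹) := by
    have hsingle : ∏ i, Pi.mulSingle (M := fun _ => unitary R) i₀ (d i)⁻¹ =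
        Pi.mulSingle i₀ (∏ i, d i)⁻¹ := by
      rw [← Finset.prod_inv_distrib]
      exact (map_prod (MonoidHom.mulSingle (fun _ => unitary R) i₀) _ _).symm
    rw [Finset.prod_mul_distrib, Finset.univ_prod_mulSingle, hsingle, Pi.mulSingle_inv,
      mul_inv_cancel_comm_assoc]
  change d ∈ (symmetrySubgroup (Matrix ι ι R)).comap diagonalUnitary
  rw [hdecomp]
  exact mul_mem (diagonalUnitary_mulSingle_mem hd)
    (prod_mem fun i _ => diagonalUnitary_mulSingle_mul_mulSingle_inv_mem i i₀ (d i))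

theorem mem_symmetrySubgroup_of_isDiag {u : unitary (Matrix ι ι R)}
    (hu : (u : Matrix ι ι R).IsDiag) (hdet : (u : Matrix ι ι R).det ^ 2 = 1) :
    u ∈ symmetrySubgroup (Matrix ι ι R) := by
  have hdiag : diagonal (u : Matrix ι ι R).diag = u := hu.diagonal_diag
  have hunit : ∀ i, (u : Matrix ι ι R) i i ∈ unitary R := fun i => by
    have h := congr_fun₂ (Unitary.coe_star_mul_self u) i i
    rw [← hdiag, star_eq_conjTranspose, diagonal_conjTranspose, diagonal_mul_diagonal] at h
    simp only [diagonal_apply_eq, one_apply_eq, Pi.star_apply, diag_apply] at h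
    exact ⟨h, by rwa [mul_comm]⟩
  have hu_eq : diagonalUnitary (fun i => ⟨_, hunit i⟩) = u := Subtype.ext hdiag
  rw [← hu_eq]
  apply diagonalUnitary_mem_symmetrySubgroup
  apply Subtype.ext
  rw [← hdiag, det_diagonal] at hdet
  simpa using hdet

end CommRing

section RCLike

variable {𝕜 : Type*} [RCLike 𝕜]

theorem isCompact_unitary : IsCompact (unitary (Matrix ι ι 𝕜) : Set (Matrix ι ι 𝕜)) := by
  have hball : IsCompact ((univ.pi fun _ : ι => univ.pi fun _ : ι =>
      Metric.closedBall (0 : 𝕜) 1) : Set (Matrix ι ι 𝕜)) :=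
    isCompact_univ_pi fun _ => isCompact_univ_pi fun _ => isCompact_closedBall 0 1
  refine hball.of_isClosed_subset (isClosed_unitary (R := Matrix ι ι 𝕜)) fun U hU i _ j _ => ?_
  simpa using entry_norm_bound_of_unitary hU i j

/-- As `2 / 0 = 0`, `householder 0 = 1`, and `householder v` is a symmetry for every `v`. -/
def householder (v : ι → 𝕜) : Matrix ι ι 𝕜 :=
  1 - (2 / (star v ⬝ᵥ v)) • vecMulVec v (star v)

theorem householder_zero : householder (0 : ι → 𝕜) = 1 := by
  simp [householder]

theorem householder_conjTranspose (v : ι → 𝕜) : (householder v)ᴴ = householder v := by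
  simp [householder, conjTranspose_smul, conjTranspose_vecMulVec, star_div₀, ← star_dotProduct]

theorem householder_mul_self (v : ι → 𝕜) : householder v * householder v = 1 := by
  have hcoef : ∀ q : 𝕜, 2 / q * (2 / q) * q = 2 / q + 2 / q := fun q => by
    rcases eq_or_ne q 0 with hq | hq
    · simp [hq]
    · field_simp; ring
  simp only [householder, sub_mul, mul_sub, one_mul, mul_one, smul_mul_smul_comm,
    vecMulVec_mul_vecMulVec, vecMulVec_smul, smul_smul, hcoef, add_smul]
  abel

theorem householder_mem_unitary (v : ι → 𝕜) : householder v ∈ unitary (Matrix ι ι 𝕜) := by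
  rw [Unitary.mem_iff, star_eq_conjTranspose, householder_conjTranspose, and_self,
    householder_mul_self]

open scoped ComplexOrder in
theorem householder_sub_mulVec {c w : ι → 𝕜} (hnorm : star c ⬝ᵥ c = star w ⬝ᵥ w)
    (hreal : star w ⬝ᵥ c = star c ⬝ᵥ w) : householder (c - w) *ᵥ c = w := by
  set q := star (c - w) ⬝ᵥ (c - w)
  rcases eq_or_ne q 0 with hq | hq
  · rw [dotProduct_star_self_eq_zero, sub_eq_zero] at hq
    subst hq
    simp [householder]
  have hq2 : q = 2 * (star (c - w) ⬝ᵥ c) := by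
    simp only [q, star_sub, sub_dotProduct, dotProduct_sub]
    rw [← hnorm, ← hreal]
    ring
  have hcoef : 2 / q * (star (c - w) ⬝ᵥ c) = 1 := by
    rw [hq2] at hq ⊢
    have := right_ne_zero_of_mul hq
    field_simp
  simp only [householder, sub_mulVec, one_mulVec, smul_mulVec, vecMulVec_mulVec, op_smul_eq_smul,
    smul_smul]
  rw [hcoef, one_smul, sub_sub_cancel]

theorem commute_single_householder {v : ι → 𝕜} {i : ι} (hv : v i = 0) :
    Commute (single i i 1) (householder v) := by
  have hleft : single i i 1 * vecMulVec v (star v) = 0 := by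
    simp [mul_vecMulVec, single_mulVec_eq, hv]
  have hright : vecMulVec v (star v) * single i i 1 = 0 := by
    simpa [conjTranspose_vecMulVec] using congr_arg conjTranspose hleft
  simp only [Commute, SemiconjBy, householder, mul_sub, sub_mul, mul_one, one_mul, mul_smul_comm,
    smul_mul_assoc, hleft, hright]

open scoped ComplexOrder in
theorem continuousAt_householder {v : ι → 𝕜} (hv : v ≠ 0) : ContinuousAt householder v := by
  have hq : star v ⬝ᵥ v ≠ 0 := dotProduct_star_self_eq_zero.not.mpr hv
  unfold householder
  fun_prop (disch := exact hq)

end RCLike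

end Matrix

namespace ContinuousMap

variable {X R ι : Type*} [TopologicalSpace X] [CommSemiring R] [TopologicalSpace R]
  [IsTopologicalSemiring R] [Fintype ι] [DecidableEq ι]

def evalMatrix (x : X) : Matrix ι ι C(X, R) →ₐ[R] Matrix ι ι R :=
  (ContinuousMap.evalAlgHom R R x).mapMatrix

theorem evalMatrix_apply (x : X) (M : Matrix ι ι C(X, R)) (i j : ι) :
    evalMatrix x M i j = M i j x := rfl

theorem evalMatrix_star [StarRing R] [ContinuousStar R] (x : X) (M : Matrix ι ι C(X, R)) :
    evalMatrix x (star M) = star (evalMatrix x M) := rfl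

theorem evalMatrix_single (x : X) (i j : ι) :
    evalMatrix x (single i j (1 : C(X, R))) = single i j 1 :=
  map_single i j 1 (ContinuousMap.evalAlgHom R R x)

theorem matrix_ext_evalMatrix {M N : Matrix ι ι C(X, R)}
    (h : ∀ x, evalMatrix x M = evalMatrix x N) : M = N := by
  ext i j x
  exact congr_fun₂ (h x) i j

end ContinuousMap

namespace ExtremallyDisconnected

variable {X : Type u} [TopologicalSpace X] [CompactSpace X] [T2Space X] [ExtremallyDisconnected X]

theorem exists_continuous_eqOn {Y : Type v} [TopologicalSpace Y] [T2Space Y] {D : Set X}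
    (hD : IsOpen D) (hDd : Dense D) {K : Set Y} (hK : IsCompact K) {f : X → Y}
    (hf : ContinuousOn f D) (hfK : MapsTo f D K) : ∃ F : X → Y, Continuous F ∧ EqOn F f D := by
  set Γ : Set (X × Y) := closure ((fun x => (x, f x)) '' D)
  have hΓ : IsCompact Γ := by
    refine (isCompact_univ.prod hK).of_isClosed_subset isClosed_closure
      (closure_minimal ?_ (isClosed_univ.prod hK.isClosed))
    rintro _ ⟨x, hx, rfl⟩
    exact ⟨trivial, hfK hx⟩
  have hgraph : ∀ p ∈ Γ, p.1 ∈ D → p.2 = f p.1 := by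
    intro p hp hpD
    have hφ : ContinuousAt (fun q : X × Y => (f q.1, q.2)) p :=
      ((hf.continuousAt (hD.mem_nhds hpD)).comp continuousAt_fst).prodMk continuousAt_snd
    refine (closure_minimal ?_ isClosed_diagonal (hφ.continuousWithinAt.mem_closure_image hp)).symm
    rintro _ ⟨_, ⟨x, -, rfl⟩, rfl⟩
    rfl
  -- `F` is read off a continuous section, given by projectivity, of the projection `Γ → X`.
  have hsurj : Surjective (ULift.up.{v} ∘ Prod.fst ∘ Subtype.val : Γ → ULift X) := by
    have hfst : Prod.fst '' Γ = univ := by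
      refine eq_univ_of_univ_subset
        (hDd.closure_eq ▸ closure_minimal ?_ (hΓ.image continuous_fst).isClosed)
      exact fun x hx => ⟨(x, f x), subset_closure ⟨x, hx, rfl⟩, rfl⟩
    rintro ⟨x⟩
    obtain ⟨p, hp, rfl⟩ := hfst.symm ▸ mem_univ x
    exact ⟨⟨p, hp⟩, rfl⟩
  have : CompactSpace Γ := isCompact_iff_compactSpace.mp hΓ
  -- `CompactT2.Projective` only quantifies over spaces in the universe of `X`, hence the lift.
  have : ExtremallyDisconnected (ULift.{v} X) :=
    extremallyDisconnected_of_homeo Homeomorph.ulift.symm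
  obtain ⟨σ, hσ, hσπ⟩ := CompactT2.ExtremallyDisconnected.projective (A := ULift.{v} X)
    continuous_id (continuous_uliftUp.comp (continuous_fst.comp continuous_subtype_val)) hsurj
  have hσx : ∀ x, (σ (ULift.up x)).1.1 = x := fun x =>
    congrArg ULift.down (congrFun hσπ (ULift.up x))
  refine ⟨fun x => (σ (ULift.up x)).1.2,
    continuous_snd.comp (continuous_subtype_val.comp (hσ.comp continuous_uliftUp)), fun x hx => ?_⟩
  have := hgraph _ (σ (ULift.up x)).2 ((hσx x).symm ▸ hx)
  rwa [hσx] at this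

theorem exists_continuous_eqOn_coborder {Y : Type v} [TopologicalSpace Y] [T2Space Y]
    {U : Set X} (hU : IsOpen U) {f : X → Y} (hf : ContinuousOn f U) {y : Y}
    (hy : EqOn f (fun _ => y) Uᶜ) {K : Set Y} (hK : IsCompact K) (hfK : ∀ x, f x ∈ K) :
    ∃ F : X → Y, Continuous F ∧ EqOn F f (coborder U) := by
  refine exists_continuous_eqOn hU.isLocallyClosed.isOpen_coborder dense_coborder hK
    (fun x hx => ContinuousAt.continuousWithinAt ?_) fun x _ => hfK x
  rw [coborder_eq_union_closure_compl] at hx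
  rcases hx with hx | hx
  · exact hf.continuousAt (hU.mem_nhds hx)
  · refine (continuousAt_const (y := y)).congr ?_
    filter_upwards [isClosed_closure.isOpen_compl.mem_nhds hx] with z hz
    exact (hy fun hzU => hz (subset_closure hzU)).symm

variable {𝕜 ι : Type*} [RCLike 𝕜] [Fintype ι] [DecidableEq ι]

theorem exists_polar_decomposition (g : C(X, 𝕜)) :
    ∃ μ : C(X, 𝕜), (∀ x, ‖μ x‖ = 1) ∧ ∀ x, g x = μ x * ‖g x‖ := by
  set f : X → 𝕜 := fun x => if g x = 0 then 1 else g x / ‖g x‖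
  have hf_norm : ∀ x, ‖f x‖ = 1 := fun x => by
    by_cases hx : g x = 0 <;> simp [f, hx, norm_div]
  have hf_polar : ∀ x, g x = f x * ‖g x‖ := fun x => by
    by_cases hx : g x = 0 <;> simp [f, hx]
  have hf_cont : ContinuousOn f {x | g x ≠ 0} := by
    refine ContinuousOn.congr ?_ fun x hx => if_neg hx
    exact g.continuous.continuousOn.div (by fun_prop) fun x hx => by simpa using hx
  obtain ⟨F, hF, hFf⟩ := exists_continuous_eqOn_coborder
    (isOpen_ne_fun g.continuous continuous_const) hf_cont (fun x hx => if_pos (not_not.mp hx))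
    (isCompact_sphere (0 : 𝕜) 1) fun x => by simpa using hf_norm x
  have hD : Dense (coborder {x | g x ≠ 0}) := dense_coborder
  refine ⟨⟨F, hF⟩, fun x => ?_, fun x => ?_⟩
  · refine congrFun (Continuous.ext_on hD (continuous_norm.comp hF) continuous_const
      fun y hy => ?_) x
    simp [hFf hy, hf_norm y]
  · refine congrFun (Continuous.ext_on hD g.continuous
      (hF.mul (RCLike.continuous_ofReal.comp (continuous_norm.comp g.continuous)))
      fun y hy => ?_) x
    simp [hFf hy, ← hf_polar y]

theorem exists_continuous_householder {c w : X → ι → 𝕜} (hc : Continuous c)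
    (hw : Continuous w) (hnorm : ∀ x, star (c x) ⬝ᵥ c x = star (w x) ⬝ᵥ w x)
    (hreal : ∀ x, star (w x) ⬝ᵥ c x = star (c x) ⬝ᵥ w x) :
    ∃ H : X → Matrix ι ι 𝕜, Continuous H ∧ ∀ x, (H x)ᴴ = H x ∧ H x * H x = 1 ∧
      H x *ᵥ c x = w x ∧ ∀ i, (∀ y, c y i = w y i) → Commute (single i i 1) (H x) := by
  have hv : Continuous fun x => c x - w x := hc.sub hw
  obtain ⟨H, hH, hHf⟩ := exists_continuous_eqOn_coborder (isOpen_ne_fun hv continuous_const)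
    (f := fun x => householder (c x - w x)) (y := 1)
    (fun x hx => (ContinuousAt.comp (g := householder) (f := fun y => c y - w y)
      (continuousAt_householder hx) hv.continuousAt).continuousWithinAt)
    (fun x hx => by simp [not_not.mp hx, householder_zero]) isCompact_unitary
    fun x => householder_mem_unitary _
  have hD : Dense (coborder {x | c x - w x ≠ 0}) := dense_coborder
  refine ⟨H, hH, fun x => ⟨?_, ?_, ?_, fun i hi => ?_⟩⟩
  · refine congrFun (Continuous.ext_on hD hH.matrix_conjTranspose hH fun y hy => ?_) x
    simp only [hHf hy, householder_conjTranspose]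
  · refine congrFun (Continuous.ext_on hD (hH.matrix_mul hH) continuous_const fun y hy => ?_) x
    simp only [hHf hy, householder_mul_self]
  · refine congrFun (Continuous.ext_on hD (hH.matrix_mulVec hc) hw fun y hy => ?_) x
    simp only [hHf hy, householder_sub_mulVec (hnorm y) (hreal y)]
  · refine congrFun (Continuous.ext_on hD (continuous_const.matrix_mul hH)
      (hH.matrix_mul continuous_const) fun y hy => ?_) x
    simp only [hHf hy]
    exact commute_single_householder (by simp [hi y])

theorem exists_continuous_householder_single {c : X → ι → 𝕜} (hc : Continuous c)
    (hc_norm : ∀ x, star (c x) ⬝ᵥ c x = 1) (k : ι) :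
    ∃ μ : C(X, 𝕜), (∀ x, conj (μ x) * μ x = 1) ∧ ∃ H : X → Matrix ι ι 𝕜, Continuous H ∧
      ∀ x, (H x)ᴴ = H x ∧ H x * H x = 1 ∧ H x *ᵥ c x = Pi.single k (μ x) ∧
        ∀ i ≠ k, (∀ y, c y i = 0) → Commute (single i i 1) (H x) := by
  obtain ⟨μ, hμ_norm, hμ_polar⟩ :=
    exists_polar_decomposition ⟨fun x => c x k, (continuous_apply k).comp hc⟩
  have hμ_unit : ∀ x, conj (μ x) * μ x = 1 := fun x => by
    rw [RCLike.conj_mul, hμ_norm]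
    simp
  have hnorm : ∀ x, star (c x) ⬝ᵥ c x = star (Pi.single k (μ x)) ⬝ᵥ Pi.single k (μ x) :=
    fun x => by simp [hc_norm, hμ_unit]
  have hreal : ∀ x, star (Pi.single k (μ x)) ⬝ᵥ c x = star (c x) ⬝ᵥ Pi.single k (μ x) :=
    fun x => by
      rw [← Pi.single_star, single_dotProduct, dotProduct_single, Pi.star_apply,
        show c x k = μ x * ‖c x k‖ from hμ_polar x]
      simp only [star_mul', RCLike.star_def, RCLike.conj_ofReal]
      ring
  obtain ⟨H, hH, hH_prop⟩ := exists_continuous_householder hc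
    (continuous_const.update k μ.continuous) hnorm hreal
  exact ⟨μ, hμ_unit, H, hH, fun x => ⟨(hH_prop x).1, (hH_prop x).2.1, (hH_prop x).2.2.1,
    fun i hik hi => (hH_prop x).2.2.2 i fun y => by simp [hi y, hik]⟩⟩

open ContinuousMap in
theorem exists_symmetry_commute_single {M : Matrix ι ι C(X, 𝕜)}
    (hM : M ∈ unitary (Matrix ι ι C(X, 𝕜))) {S : Finset ι} {k : ι} (hk : k ∉ S)
    (hS : ∀ i ∈ S, Commute (single i i 1) M) :
    ∃ h : unitary (Matrix ι ι C(X, 𝕜)), star (h : Matrix ι ι C(X, 𝕜)) = h ∧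
      (∀ i ∈ S, Commute (single i i 1) (h : Matrix ι ι C(X, 𝕜))) ∧
      Commute (single k k 1) ((h : Matrix ι ι C(X, 𝕜)) * M) := by
  have hcol_norm : ∀ x, star (fun i => M i k x) ⬝ᵥ (fun i => M i k x) = 1 := fun x => by
    have h := congr_arg (evalMatrix x) (Unitary.star_mul_self_of_mem hM)
    rw [map_mul, evalMatrix_star, map_one] at h
    simpa [Matrix.mul_apply, dotProduct, evalMatrix_apply] using congr_fun₂ h k k
  obtain ⟨μ, hμ_unit, F, hF, hF_prop⟩ := exists_continuous_householder_single
    (continuous_pi fun i => (M i k).continuous) hcol_norm k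
  let H : Matrix ι ι C(X, 𝕜) := of fun i j => ⟨fun x => F x i j, hF.matrix_elem i j⟩
  have hH : ∀ x, evalMatrix x H = F x := fun x => rfl
  have hH_sa : star H = H := matrix_ext_evalMatrix fun x => by
    rw [evalMatrix_star, hH, star_eq_conjTranspose, (hF_prop x).1]
  have hH_sq : H * H = 1 := matrix_ext_evalMatrix fun x => by
    rw [map_mul, map_one, hH, (hF_prop x).2.1]
  have hH_unit : H ∈ unitary (Matrix ι ι C(X, 𝕜)) := by
    rw [Unitary.mem_iff, hH_sa, hH_sq, and_self]
  have hHM_col : ∀ i, (H * M) i k = Pi.single (M := fun _ => C(X, 𝕜)) k μ i := fun i =>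
    ContinuousMap.ext fun x => by
      change evalMatrix x (H * M) i k = _
      rw [map_mul, hH]
      change (F x *ᵥ fun j => M j k x) i = _
      rw [(hF_prop x).2.2.1]
      by_cases hik : i = k
      · subst hik
        simp
      · simp [hik]
  refine ⟨⟨H, hH_unit⟩, hH_sa, fun i hi => ?_, ?_⟩
  · have hik : i ≠ k := fun h => hk (h ▸ hi)
    refine matrix_ext_evalMatrix fun x => ?_
    rw [map_mul, map_mul, evalMatrix_single, hH]
    refine (hF_prop x).2.2.2 i hik fun y => ?_
    rw [row_eq_zero_of_commute_single (hS i hi) hik.symm, ContinuousMap.zero_apply]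
  · refine commute_single_of_mem_unitary (mul_mem hH_unit hM) ?_ fun i hi => ?_
    · rw [hHM_col, Pi.single_eq_same]
      exact .of_mul_eq_one_right (star μ) (ContinuousMap.ext hμ_unit)
    · rw [hHM_col, Pi.single_eq_of_ne hi]

theorem exists_mem_symmetrySubgroup_isDiag (u : unitary (Matrix ι ι C(X, 𝕜))) :
    ∃ s ∈ symmetrySubgroup (Matrix ι ι C(X, 𝕜)),
      ((s * u : unitary (Matrix ι ι C(X, 𝕜))) : Matrix ι ι C(X, 𝕜)).IsDiag := by
  have hcommute : ∀ S : Finset ι, ∃ s ∈ symmetrySubgroup (Matrix ι ι C(X, 𝕜)), ∀ i ∈ S,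
      Commute (single i i 1) ((s * u : unitary (Matrix ι ι C(X, 𝕜))) : Matrix ι ι C(X, 𝕜)) := by
    intro S
    induction S using Finset.induction_on with
    | empty => exact ⟨1, one_mem _, by simp⟩
    | insert k S hk ih =>
      obtain ⟨s, hs, hsS⟩ := ih
      obtain ⟨h, hh, hhS, hhk⟩ := exists_symmetry_commute_single (s * u).2 hk hsS
      refine ⟨h * s, mul_mem (Subgroup.subset_closure hh) hs, ?_⟩
      rw [mul_assoc, Submonoid.coe_mul, Finset.forall_mem_insert]
      exact ⟨hhk, fun i hi => (hhS i hi).mul_right (hsS i hi)⟩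
  obtain ⟨s, hs, hdiag⟩ := hcommute Finset.univ
  exact ⟨s, hs, fun i j hij => row_eq_zero_of_commute_single (hdiag i (Finset.mem_univ i)) hij.symm⟩

end ExtremallyDisconnected

theorem symmetry_subgroup_eq_det_sq_one_general
    {X : Type*} [TopologicalSpace X] [CompactSpace X] [T2Space X]
    [ExtremallyDisconnected X]
    {n : ℕ}
    (u : unitary (Matrix (Fin n) (Fin n) C(X, ℂ))) :
    u ∈ Subgroup.closure
        {v : unitary (Matrix (Fin n) (Fin n) C(X, ℂ)) |
          star (v : Matrix (Fin n) (Fin n) C(X, ℂ)) = (v : Matrix (Fin n) (Fin n) C(X, ℂ))}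
      ↔ ((u : Matrix (Fin n) (Fin n) C(X, ℂ)).det) ^ 2 = 1 := by
  refine ⟨det_sq_eq_one_of_mem_symmetrySubgroup, fun hdet => ?_⟩
  obtain ⟨s, hs, hdiag⟩ := ExtremallyDisconnected.exists_mem_symmetrySubgroup_isDiag u
  have hsu : s * u ∈ symmetrySubgroup _ := mem_symmetrySubgroup_of_isDiag hdiag <| by
    rw [Submonoid.coe_mul, det_mul, mul_pow, det_sq_eq_one_of_mem_symmetrySubgroup hs, hdet,
      one_mul]
  rw [← inv_mul_cancel_left s u]
  exact mul_mem (inv_mem hs) hsu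

/-- In the unitary group of `n × n` matrices over `C(X, ℂ)` (`X` Stonean,
`n ≥ 2`), the subgroup generated by the self-adjoint unitaries (symmetries)
consists exactly of the unitaries whose determinant squares to `1`. -/
theorem symmetry_subgroup_eq_det_sq_one
    {X : Type*} [TopologicalSpace X] [CompactSpace X] [T2Space X]
    [ExtremallyDisconnected X]
    {n : ℕ} (hn : 2 ≤ n)
    (u : unitary (Matrix (Fin n) (Fin n) C(X, ℂ))) :
    u ∈ Subgroup.closure
        {v : unitary (Matrix (Fin n) (Fin n) C(X, ℂ)) |
          star (v : Matrix (Fin n) (Fin n) C(X, ℂ)) = (v : Matrix (Fin n) (Fin n) C(X, ℂ))}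
      ↔ ((u : Matrix (Fin n) (Fin n) C(X, ℂ)).det) ^ 2 = 1 :=
  symmetry_subgroup_eq_det_sq_one_general u
end

section
/- There is no ℂ-linear map h : M₂(ℂ) → M₂(ℂ) satisfying all of: (i) h(0) = 0 and h(1) = 1; (ii) h(p) = 1 − p for every projection p ∈ M₂(ℂ) with p ≠ 0 and p ≠ 1; and (iii) h(u) = (det u) • u for every unitary matrix u ∈ M₂(ℂ) with (det u)² = 1. -/
/-!
With `p = E₁₁`, the unitary `u = diag(i, -i)` of determinant `1` is `i • (p - (1 - p))`, a
combination of two nontrivial projections. Linearity and (ii) force `h u = -u`, while (iii)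
forces `h u = u`.
-/

open Matrix

namespace Matrix

variable {n α : Type*} [DecidableEq n]

theorem isStarProjection_single_one [Fintype n] [Semiring α] [StarRing α] (i : n) :
    IsStarProjection (single i i (1 : α)) where
  isIdempotentElem := by rw [IsIdempotentElem, single_mul_single_same, mul_one]
  isSelfAdjoint := by rw [IsSelfAdjoint, star_eq_conjTranspose, conjTranspose_single, star_one]

theorem single_one_ne_zero [Semiring α] [Nontrivial α] (i : n) : single i i (1 : α) ≠ 0 :=
  fun h => by simpa using congrFun₂ h i i

theorem single_one_ne_one [Semiring α] [Nontrivial α] {i j : n} (hij : i ≠ j) :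
    single i i (1 : α) ≠ 1 :=
  fun h => by simpa [single_apply_of_row_ne hij] using congrFun₂ h j j

theorem diagonal_mem_unitary [Fintype n] [CommRing α] [StarRing α] {d : n → α}
    (hd : ∀ i, star (d i) * d i = 1) : diagonal d ∈ unitary (Matrix n n α) := by
  rw [Unitary.mem_iff, star_eq_conjTranspose, diagonal_conjTranspose, diagonal_mul_diagonal,
    diagonal_mul_diagonal, ← diagonal_one]
  exact ⟨congrArg diagonal (funext hd), congrArg diagonal (funext fun i => (mul_comm _ _).trans (hd i))⟩

end Matrix

theorem LinearMap.map_smul_sub_eq_neg_of_map_eq_one_sub {R A : Type*} [CommRing R] [Ring A]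
    [Algebra R A] (h : A →ₗ[R] A) {p q : A} (hp : h p = 1 - p) (hq : h q = 1 - q) (c : R) :
    h (c • (p - q)) = -(c • (p - q)) := by
  rw [map_smul, map_sub, hp, hq, sub_sub_sub_cancel_left, ← smul_neg, neg_sub]

/-- No `ℂ`-linear map on `M₂(ℂ)` sends `0 ↦ 0`, `1 ↦ 1`, every nontrivial
projection `p` to `1 - p`, and every unitary `u` with `(det u)² = 1` to
`(det u) • u`. -/
theorem no_linear_extension_of_equivariant_pair :
    ¬ ∃ h : Matrix (Fin 2) (Fin 2) ℂ →ₗ[ℂ] Matrix (Fin 2) (Fin 2) ℂ,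
      h 0 = 0 ∧ h 1 = 1 ∧
      (∀ p : Matrix (Fin 2) (Fin 2) ℂ,
        p * p = p → star p = p → p ≠ 0 → p ≠ 1 → h p = 1 - p) ∧
      (∀ u : Matrix (Fin 2) (Fin 2) ℂ,
        u * star u = 1 → star u * u = 1 → u.det ^ 2 = 1 → h u = u.det • u) := by
  rintro ⟨h, -, -, hproj, huni⟩
  have hflip (p) (hp : IsStarProjection p) (hp0 : p ≠ 0) (hp1 : p ≠ 1) : h p = 1 - p :=
    hproj p hp.isIdempotentElem hp.isSelfAdjoint hp0 hp1
  set p : Matrix (Fin 2) (Fin 2) ℂ := single 0 0 1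
  have hp : IsStarProjection p := isStarProjection_single_one 0
  have hp0 : p ≠ 0 := single_one_ne_zero 0
  have hp1 : p ≠ 1 := single_one_ne_one Fin.zero_ne_one
  set u : Matrix (Fin 2) (Fin 2) ℂ := diagonal ![Complex.I, -Complex.I]
  have hu_unitary : u ∈ unitary _ := diagonal_mem_unitary fun i => by fin_cases i <;> simp
  have hu_det : u.det = 1 := by simp [u, det_diagonal, Fin.prod_univ_two]
  have hu_eq : u = Complex.I • (p - (1 - p)) := by
    ext i j; fin_cases i <;> fin_cases j <;> simp [u, p, one_apply]
  have hneg : h u = -u := hu_eq ▸ h.map_smul_sub_eq_neg_of_map_eq_one_sub (hflip p hp hp0 hp1)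
    (hflip (1 - p) hp.one_sub (sub_ne_zero.2 hp1.symm) (by simpa using hp0)) Complex.I
  have hpos : h u = u := by
    rw [huni u (Unitary.mul_star_self_of_mem hu_unitary) (Unitary.star_mul_self_of_mem hu_unitary)
      (by rw [hu_det, one_pow]), hu_det, one_smul]
  have hI : Complex.I = -Complex.I := by simpa [u] using congrFun₂ (hpos.symm.trans hneg) 0 0
  exact Complex.I_ne_zero (self_eq_neg.mp hI)
end

section
/- Let A and B be unital C*-algebras such that the closure of the ℂ-linear span of the set of projections of A is all of A. Let g : A → B be a continuous ℂ-linear map with g(1) = 1 such that g((1 − 2p)(1 − 2q)) = (1 − 2·g(p))·(1 − 2·g(q)) for all projections p, q ∈ A. Then g is multiplicative: g(a·b) = g(a)·g(b) for all a, b ∈ A. -/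
/-!
Expanding `(1 - 2p)(1 - 2q) = 1 - 2p - 2q + 4pq` on both sides of the hypothesis and cancelling
the linear terms shows that `g` is multiplicative on pairs of projections. Multiplicativity then
spreads to all of `A` in two rounds, first in the left factor and then in the right one: in each
round both sides are continuous linear maps of the free factor that agree on the projections,
whose span is dense.
-/

theorem one_sub_two_nsmul_mul_one_sub_two_nsmul {R : Type*} [Ring R] (x y : R) :
    (1 - 2 • x) * (1 - 2 • y) = 1 - 2 • x - 2 • y + 4 • (x * y) := by
  noncomm_ring

theorem map_mul_of_map_one_sub_two_nsmul_mul {R S F : Type*} [Ring R] [Ring S]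
    [IsAddTorsionFree S] [FunLike F R S] [AddMonoidHomClass F R S] {g : F} (hone : g 1 = 1)
    {p q : R} (h : g ((1 - 2 • p) * (1 - 2 • q)) = (1 - 2 • g p) * (1 - 2 • g q)) :
    g (p * q) = g p * g q := by
  rw [one_sub_two_nsmul_mul_one_sub_two_nsmul, one_sub_two_nsmul_mul_one_sub_two_nsmul, map_add,
    map_sub, map_sub, hone, map_nsmul, map_nsmul, map_nsmul] at h
  exact nsmul_right_injective (by norm_num) (add_left_cancel h)

namespace ContinuousLinearMap

variable {𝕜 A B : Type*} [NontriviallyNormedField 𝕜]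
  [NonUnitalNormedRing A] [NormedSpace 𝕜 A] [IsScalarTower 𝕜 A A] [SMulCommClass 𝕜 A A]
  [NonUnitalNormedRing B] [NormedSpace 𝕜 B] [IsScalarTower 𝕜 B B] [SMulCommClass 𝕜 B B]
  {s : Set A} (hs : Dense (Submodule.span 𝕜 s : Set A)) (g : A →L[𝕜] B)
include hs

theorem map_mul_right_of_dense_span {q : A} (h : ∀ p ∈ s, g (p * q) = g p * g q) (a : A) :
    g (a * q) = g a * g q := by
  have key : g.comp ((mul 𝕜 A).flip q) = ((mul 𝕜 B).flip (g q)).comp g :=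
    ext_on hs fun p hp ↦ by simpa using h p hp
  simpa using congr($key a)

theorem map_mul_left_of_dense_span {a : A} (h : ∀ q ∈ s, g (a * q) = g a * g q) (b : A) :
    g (a * b) = g a * g b := by
  have key : g.comp (mul 𝕜 A a) = (mul 𝕜 B (g a)).comp g :=
    ext_on hs fun q hq ↦ by simpa using h q hq
  simpa using congr($key b)

theorem map_mul_of_dense_span (h : ∀ p ∈ s, ∀ q ∈ s, g (p * q) = g p * g q) (a b : A) :
    g (a * b) = g a * g b :=
  map_mul_left_of_dense_span hs g
    (fun q hq ↦ map_mul_right_of_dense_span hs g (fun p hp ↦ h p hp q hq) a) b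

end ContinuousLinearMap

/-- If a unital C*-algebra `A` is the closed linear span of its projections,
then any continuous unital linear map `g : A → B` satisfying
`g((1-2p)(1-2q)) = (1-2g(p))(1-2g(q))` for all projections `p, q` is
multiplicative. -/
theorem multiplicative_of_symmetry_condition
    {A B : Type*} [CStarAlgebra A] [CStarAlgebra B]
    (hspan : closure
      (↑(Submodule.span ℂ {p : A | p * p = p ∧ star p = p}) : Set A) = Set.univ)
    (g : A →L[ℂ] B)
    (hone : g 1 = 1)
    (hsym : ∀ p q : A, (p * p = p ∧ star p = p) → (q * q = q ∧ star q = q) →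
      g ((1 - 2 • p) * (1 - 2 • q)) = (1 - 2 • g p) * (1 - 2 • g q)) :
    ∀ a b : A, g (a * b) = g a * g b := by
  have : IsAddTorsionFree B := .of_isTorsionFree ℂ B
  exact g.map_mul_of_dense_span (dense_iff_closure_eq.mpr hspan) fun p hp q hq ↦
    map_mul_of_map_one_sub_two_nsmul_mul hone (hsym p q hp hq)
end

section
/- Let A and B be unital C*-algebras and let f : A → B be a function satisfying: (i) f(1) = 1; (ii) for all normal a, b ∈ A with a·b = b·a: f(a·b) = f(a)·f(b) and f(a + b) = f(a) + f(b); (iii) f(z • a) = z • f(a) for every z ∈ ℂ and every normal a ∈ A; (iv) f(a*) = f(a)* for every normal a ∈ A; (v) f restricts to a group homomorphism on unitaries: f(u) is unitary for every unitary u ∈ A, and f(u·v) = f(u)·f(v) for all unitaries u, v ∈ A. Then the following are equivalent: (1) there exists a unital ℂ-algebra homomorphism g : A → B with g(a*) = g(a)* for all a ∈ A and g(a) = f(a) for every normal a ∈ A; (2) f is additive on self-adjoint elements: f(a + b) = f(a) + f(b) for all self-adjoint a, b ∈ A. -/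
/-!
On the self-adjoint part, `f` is additive by assumption and real-homogeneous, so
`a ↦ f (ℜ a) + I • f (ℑ a)` is a `ℂ`-linear `*`-preserving map `L`. Additivity of `f` on commuting
normal elements shows that `L` agrees with `f` on normal elements, in particular on unitaries,
where it is multiplicative. Since a unital C⋆-algebra is spanned by its unitaries, the bilinear
maps `(a, b) ↦ L (a * b)` and `(a, b) ↦ L a * L b` coincide, so `L` is a `*`-homomorphism.
-/

open ComplexStarModule Complex

section ComplexStarModule

variable {A : Type*} [AddCommGroup A] [Module ℂ A] [StarAddMonoid A] [StarModule ℂ A]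

@[simp]
lemma realPart_star (a : A) : ℜ (star a) = ℜ a := by
  ext; simp [realPart_apply_coe, add_comm]

@[simp]
lemma imaginaryPart_star (a : A) : ℑ (star a) = -ℑ a := by
  ext; simp [imaginaryPart_apply_coe, smul_sub]

variable {B : Type*} [AddCommGroup B] [Module ℂ B] [StarAddMonoid B] [StarModule ℂ B]

noncomputable def complexifySelfAdjoint (φ : selfAdjoint A →ₗ[ℝ] selfAdjoint B) : A →ₗ[ℂ] B where
  toFun a := (φ (ℜ a) : B) + I • (φ (ℑ a) : B)
  map_add' a b := by simp only [map_add, AddMemClass.coe_add, smul_add]; abel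
  map_smul' z a := by
    simp only [realPart_smul, imaginaryPart_smul, map_sub, map_add, map_smul, RingHom.id_apply,
      AddSubgroupClass.coe_sub, AddMemClass.coe_add, selfAdjoint.val_smul]
    conv_rhs => rw [← re_add_im z]
    simp only [← coe_smul]
    match_scalars
    · ring
    · linear_combination (-z.im : ℂ) * I_sq

lemma complexifySelfAdjoint_apply (φ : selfAdjoint A →ₗ[ℝ] selfAdjoint B) (a : A) :
    complexifySelfAdjoint φ a = (φ (ℜ a) : B) + I • (φ (ℑ a) : B) :=
  rfl

lemma complexifySelfAdjoint_star (φ : selfAdjoint A →ₗ[ℝ] selfAdjoint B) (a : A) :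
    complexifySelfAdjoint φ (star a) = star (complexifySelfAdjoint φ a) := by
  simp [complexifySelfAdjoint_apply]

end ComplexStarModule

def selfAdjoint.linearMapOfAdditive {A B : Type*} [AddCommGroup A] [Module ℝ A] [StarAddMonoid A]
    [StarModule ℝ A] [AddCommGroup B] [Module ℝ B] [StarAddMonoid B] [StarModule ℝ B] (f : A → B)
    (hadd : ∀ a b : A, IsSelfAdjoint a → IsSelfAdjoint b → f (a + b) = f a + f b)
    (hsmul : ∀ (r : ℝ) (a : A), IsSelfAdjoint a → f (r • a) = r • f a)
    (hsa : ∀ a : A, IsSelfAdjoint a → IsSelfAdjoint (f a)) :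
    selfAdjoint A →ₗ[ℝ] selfAdjoint B where
  toFun a := ⟨f a, hsa a a.2⟩
  map_add' a b := Subtype.ext (hadd a b a.2 b.2)
  map_smul' r a := Subtype.ext (hsmul r a a.2)

lemma apply_eq_realPart_add_I_smul_imaginaryPart {A B : Type*} [NonUnitalRing A] [StarRing A]
    [Module ℂ A] [IsScalarTower ℂ A A] [SMulCommClass ℂ A A] [StarModule ℂ A]
    [AddCommGroup B] [Module ℂ B] (f : A → B)
    (hadd : ∀ a b : A, IsStarNormal a → IsStarNormal b → Commute a b → f (a + b) = f a + f b)
    (hsmul : ∀ (z : ℂ) (a : A), IsStarNormal a → f (z • a) = z • f a)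
    (a : A) [IsStarNormal a] : f a = f (ℜ a) + I • f (ℑ a) := by
  have hre : IsStarNormal (ℜ a : A) := (ℜ a).2.isStarNormal
  have him : IsStarNormal (ℑ a : A) := (ℑ a).2.isStarNormal
  calc f a = f ((ℜ a : A) + I • (ℑ a : A)) := by rw [realPart_add_I_smul_imaginaryPart]
    _ = f (ℜ a) + I • f (ℑ a) := by
      rw [hadd _ _ hre inferInstance ((Commute.realPart_imaginaryPart a).smul_right I),
        hsmul I _ him]

lemma LinearMap.map_mul_of_map_mul_unitary {A B : Type*} [CStarAlgebra A] [Ring B] [Algebra ℂ B]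
    (L : A →ₗ[ℂ] B) (h : ∀ u ∈ unitary A, ∀ v ∈ unitary A, L (u * v) = L u * L v) (a b : A) :
    L (a * b) = L a * L b := by
  have : (LinearMap.mul ℂ A).compr₂ L = (LinearMap.mul ℂ B).compl₁₂ L L :=
    LinearMap.ext_on (CStarAlgebra.span_unitary A) fun u hu =>
      LinearMap.ext_on (CStarAlgebra.span_unitary A) fun v hv => h u hu v hv
  exact congr($this a b)
theorem extends_to_star_hom_iff_additive_on_selfAdjoint_general
    {A B : Type*} [CStarAlgebra A] [CStarAlgebra B]
    (f : A → B)
    (hone : f 1 = 1)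
    (hadd : ∀ a b : A, a * star a = star a * a → b * star b = star b * b →
      a * b = b * a → f (a + b) = f a + f b)
    (hsmul : ∀ (z : ℂ) (a : A), a * star a = star a * a → f (z • a) = z • f a)
    (hstar : ∀ a : A, a * star a = star a * a → f (star a) = star (f a))
    (hunitary_mul : ∀ u v : A, u ∈ unitary A → v ∈ unitary A →
      f (u * v) = f u * f v) :
    (∃ g : A →ₐ[ℂ] B, (∀ a : A, g (star a) = star (g a)) ∧
        ∀ a : A, a * star a = star a * a → g a = f a) ↔
      (∀ a b : A, star a = a → star b = b → f (a + b) = f a + f b) := by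
  have normal_iff (a : A) : a * star a = star a * a ↔ IsStarNormal a := by
    rw [isStarNormal_iff, commute_iff_eq, eq_comm]
  constructor
  · rintro ⟨g, -, hg⟩ a b ha hb
    have hg_sa (x : A) (hx : star x = x) : g x = f x := hg x (by rw [hx])
    rw [← hg_sa a ha, ← hg_sa b hb, ← hg_sa (a + b) (by rw [star_add, ha, hb]), map_add]
  · intro H
    let φ := selfAdjoint.linearMapOfAdditive f H
      (fun r a ha => by rw [← coe_smul, hsmul _ _ ((normal_iff a).2 ha.isStarNormal), coe_smul])
      (fun a ha => by rw [IsSelfAdjoint, ← hstar a ((normal_iff a).2 ha.isStarNormal), ha.star_eq])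
    have hφ (a : A) (ha : IsStarNormal a) : complexifySelfAdjoint φ a = f a :=
      (apply_eq_realPart_add_I_smul_imaginaryPart f
        (fun a b ha hb hab => hadd a b ((normal_iff a).2 ha) ((normal_iff b).2 hb) hab.eq)
        (fun z a ha => hsmul z a ((normal_iff a).2 ha)) a).symm
    have hφ_mul := (complexifySelfAdjoint φ).map_mul_of_map_mul_unitary fun u hu v hv => by
      rw [hφ _ (isStarNormal_of_mem_unitary hu), hφ _ (isStarNormal_of_mem_unitary hv),
        hφ _ (isStarNormal_of_mem_unitary (mul_mem hu hv)), hunitary_mul u v hu hv]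
    refine ⟨AlgHom.ofLinearMap (complexifySelfAdjoint φ) ?_ hφ_mul,
      complexifySelfAdjoint_star φ, fun a ha => hφ a ((normal_iff a).1 ha)⟩
    rw [hφ 1 IsStarNormal.one, hone]

/-- A morphism of piecewise C*-algebras `N(A) → N(B)` that restricts to a group
homomorphism on unitaries extends to a `*`-homomorphism `A → B` iff it is
additive on self-adjoint elements. -/
theorem extends_to_star_hom_iff_additive_on_selfAdjoint
    {A B : Type*} [CStarAlgebra A] [CStarAlgebra B]
    (f : A → B)
    (hone : f 1 = 1)
    (hmul : ∀ a b : A, a * star a = star a * a → b * star b = star b * b →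
      a * b = b * a → f (a * b) = f a * f b)
    (hadd : ∀ a b : A, a * star a = star a * a → b * star b = star b * b →
      a * b = b * a → f (a + b) = f a + f b)
    (hsmul : ∀ (z : ℂ) (a : A), a * star a = star a * a → f (z • a) = z • f a)
    (hstar : ∀ a : A, a * star a = star a * a → f (star a) = star (f a))
    (hunitary : ∀ u : A, u ∈ unitary A → f u ∈ unitary B)
    (hunitary_mul : ∀ u v : A, u ∈ unitary A → v ∈ unitary A →
      f (u * v) = f u * f v) :
    (∃ g : A →ₐ[ℂ] B, (∀ a : A, g (star a) = star (g a)) ∧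
        ∀ a : A, a * star a = star a * a → g a = f a) ↔
      (∀ a b : A, star a = a → star b = b → f (a + b) = f a + f b) :=
  extends_to_star_hom_iff_additive_on_selfAdjoint_general f hone hadd hsmul hstar hunitary_mul
end
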